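/- arXiv:1710.08990 — 11 statements merged into one kernel-verified Lean document; each statement's English description precedes it below -/
import Mathlib

section
/- Suppose a is eventually periodic with some period ℓ ≥ 1 and pre-period k, i.e., a(j+ℓ) = a(j) for all j > k (equivalently, a is the sequence of partial quotients of a quadratic irrational). Then the generating functions F(z) = ∑_{n≥0} p(n)·zⁿ and G(z) = ∑_{n≥0} q(n)·zⁿ, viewed as formal power series in ℤ[[z]], are rational functions with integer coefficients: there exist polynomials u, v ∈ ℤ[z] with v having constant coefficient 1 such that v·F = u in ℤ[[z]], and there exist polynomials u', v' ∈ ℤ[z] with v' having constant coefficient 1 such that v'·G = u' in ℤ[[z]]. -/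
/-!
The vectors `V n = (s (n + 1), s n)` evolve by `V (n + 1) = A n V n` with
`A n = [[c (n + 2), 1], [1, 0]]`. Once `A` is `ℓ`-periodic, the period product
`P n = A (n + ℓ - 1) ⋯ A n` satisfies `P n ^ i = A (n + iℓ - 1) ⋯ A n`, and `P (n + 1)`, `P n` are
the two cyclic rotations `x y`, `y x` of one product, so they share a characteristic polynomial `χ`.
Cayley–Hamilton `χ (P n) = 0`, applied to `V n`, is a linear recurrence with constant coefficients
in steps of `ℓ`, and such a recurrence makes the generating function rational with denominator
`∑ χᵢ X^((deg χ - i) ℓ)`, the reversal of `χ` evaluated at `X^ℓ`.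
-/

open Polynomial Finset
open scoped Matrix

section TransferProd

variable {M : Type*} [Monoid M] (A : ℕ → M)

def transferProd (n : ℕ) : ℕ → M
  | 0 => 1
  | j + 1 => A (n + j) * transferProd n j

lemma transferProd_add (n i j : ℕ) :
    transferProd A n (i + j) = transferProd A (n + i) j * transferProd A n i := by
  induction j with
  | zero => simp [transferProd]
  | succ j ih => rw [← add_assoc, transferProd, ih, transferProd, mul_assoc, add_assoc]

variable {A} {k ℓ : ℕ}

lemma transferProd_add_period (hA : ∀ i, k ≤ i → A (i + ℓ) = A i) {n : ℕ} (hn : k ≤ n)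
    (j : ℕ) : transferProd A (n + ℓ) j = transferProd A n j := by
  induction j with
  | zero => rfl
  | succ j ih => rw [transferProd, transferProd, ih, add_right_comm, hA _ (by omega)]

lemma transferProd_mul_period (hA : ∀ i, k ≤ i → A (i + ℓ) = A i) {n : ℕ} (hn : k ≤ n)
    (i : ℕ) : transferProd A n (i * ℓ) = transferProd A n ℓ ^ i := by
  induction i generalizing n with
  | zero => simp [transferProd]
  | succ i ih =>
    rw [add_one_mul, add_comm, transferProd_add, ih (by omega),
      transferProd_add_period hA hn, pow_succ]

lemma exists_transferProd_succ_eq_mul_and_eq_mul (hA : ∀ i, k ≤ i → A (i + ℓ) = A i)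
    {n : ℕ} (hn : k ≤ n) :
    ∃ x y : M, transferProd A (n + 1) ℓ = x * y ∧ transferProd A n ℓ = y * x := by
  rcases ℓ with _ | m
  · exact ⟨1, 1, by simp [transferProd], by simp [transferProd]⟩
  · refine ⟨A n, transferProd A (n + 1) m, ?_, ?_⟩
    · rw [transferProd, ← hA n hn, add_right_comm, add_assoc]
    · rw [add_comm m, transferProd_add]
      simp [transferProd]

end TransferProd

section Matrix

variable {R ι : Type*} [CommRing R] [Fintype ι] [DecidableEq ι] {A : ℕ → Matrix ι ι R}
  {k ℓ : ℕ}

lemma charpoly_transferProd_eq (hA : ∀ i, k ≤ i → A (i + ℓ) = A i) {n : ℕ} (hn : k ≤ n) :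
    (transferProd A n ℓ).charpoly = (transferProd A k ℓ).charpoly := by
  induction n, hn using Nat.le_induction with
  | base => rfl
  | succ n hn ih =>
    obtain ⟨x, y, hxy, hyx⟩ := exists_transferProd_succ_eq_mul_and_eq_mul hA hn
    rw [hxy, Matrix.charpoly_mul_comm, ← hyx, ih]

lemma eq_transferProd_mulVec {V : ℕ → ι → R} (hV : ∀ n, V (n + 1) = A n *ᵥ V n) (n j : ℕ) :
    V (n + j) = transferProd A n j *ᵥ V n := by
  induction j with
  | zero => simp [transferProd]
  | succ j ih => rw [← add_assoc, hV, ih, transferProd, Matrix.mulVec_mulVec]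

theorem sum_charpoly_coeff_smul_eq_zero (hA : ∀ i, k ≤ i → A (i + ℓ) = A i)
    {V : ℕ → ι → R} (hV : ∀ n, V (n + 1) = A n *ᵥ V n) {n : ℕ} (hn : k ≤ n) :
    ∑ i ∈ range ((transferProd A k ℓ).charpoly.natDegree + 1),
      (transferProd A k ℓ).charpoly.coeff i • V (n + i * ℓ) = 0 := by
  have hCH : aeval (transferProd A n ℓ) (transferProd A k ℓ).charpoly = 0 := by
    rw [← charpoly_transferProd_eq hA hn, Matrix.aeval_self_charpoly]
  calc _ = aeval (transferProd A n ℓ) (transferProd A k ℓ).charpoly *ᵥ V n := by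
        rw [aeval_eq_sum_range, Matrix.sum_mulVec]
        refine sum_congr rfl fun i _ => ?_
        rw [Matrix.smul_mulVec, ← transferProd_mul_period hA hn, ← eq_transferProd_mulVec hV]
    _ = 0 := by rw [hCH, Matrix.zero_mulVec]

end Matrix

namespace PowerSeries

variable {R : Type*}

lemma coe_trunc_eq_self_of_coeff_eq_zero [Semiring R] {f : R⟦X⟧} {N : ℕ}
    (h : ∀ n, N ≤ n → coeff n f = 0) : (trunc N f : R⟦X⟧) = f := by
  ext n
  rw [Polynomial.coeff_coe, coeff_trunc]
  split_ifs with hn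
  · rfl
  · exact (h n (not_lt.1 hn)).symm

theorem exists_mul_mk_eq_coe_of_recurrence [CommRing R] {s : ℕ → R} {χ : R[X]} (hχ : χ.Monic)
    {ℓ N : ℕ} (hℓ : 1 ≤ ℓ)
    (hs : ∀ m, N ≤ m → ∑ i ∈ range (χ.natDegree + 1), χ.coeff i * s (m + i * ℓ) = 0) :
    ∃ u v : R[X], v.coeff 0 = 1 ∧ (v : R⟦X⟧) * mk s = u := by
  set d := χ.natDegree
  set v : R[X] := ∑ i ∈ range (d + 1), Polynomial.C (χ.coeff i) * Polynomial.X ^ ((d - i) * ℓ)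
  have hv0 : v.coeff 0 = 1 := by
    rw [finsetSum_coeff, sum_eq_single d]
    · rw [Nat.sub_self, zero_mul, pow_zero, mul_one, coeff_C_zero]
      exact hχ.coeff_natDegree
    · intro i hi hid
      have : (d - i) * ℓ ≠ 0 := Nat.mul_ne_zero (by have := mem_range.1 hi; omega) (by omega)
      simp [this.symm]
    · simp
  have hcoeff : ∀ m, coeff (m + d * ℓ) ((v : R⟦X⟧) * mk s) =
      ∑ i ∈ range (d + 1), χ.coeff i * s (m + i * ℓ) := by
    intro m
    have hv : (v : R⟦X⟧) = ∑ i ∈ range (d + 1), C (χ.coeff i) * X ^ ((d - i) * ℓ) := by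
      rw [← Polynomial.coeToPowerSeries.ringHom_apply]
      simp only [v, map_sum, map_mul, map_pow, Polynomial.coeToPowerSeries.ringHom_apply,
        Polynomial.coe_C, Polynomial.coe_X]
    rw [hv, sum_mul, map_sum]
    refine sum_congr rfl fun i hi => ?_
    have hdi : d * ℓ = (d - i) * ℓ + i * ℓ := by
      rw [← add_mul, Nat.sub_add_cancel (Nat.lt_succ_iff.1 (mem_range.1 hi))]
    rw [mul_assoc, coeff_C_mul, coeff_X_pow_mul', if_pos (by omega), coeff_mk]
    congr 2
    omega
  refine ⟨trunc (N + d * ℓ) ((v : R⟦X⟧) * mk s), v, hv0,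
    (coe_trunc_eq_self_of_coeff_eq_zero fun n hn => ?_).symm⟩
  obtain ⟨m, rfl⟩ : ∃ m, n = m + d * ℓ := ⟨n - d * ℓ, by omega⟩
  rw [hcoeff, hs m (by omega)]

end PowerSeries

theorem exists_mul_mk_eq_coe_of_continuant_of_periodic {R : Type*} [CommRing R] {c s : ℕ → R}
    {k ℓ : ℕ} (hℓ : 1 ≤ ℓ) (hc : ∀ j, k < j → c (j + ℓ) = c j)
    (hs : ∀ n, s (n + 2) = c (n + 2) * s (n + 1) + s n) :
    ∃ u v : R[X], v.coeff 0 = 1 ∧ (v : PowerSeries R) * PowerSeries.mk s = u := by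
  set A : ℕ → Matrix (Fin 2) (Fin 2) R := fun n => !![c (n + 2), 1; 1, 0]
  set V : ℕ → Fin 2 → R := fun n => ![s (n + 1), s n]
  have hA : ∀ i, k ≤ i → A (i + ℓ) = A i := fun i hi => by
    simp only [A, add_right_comm i ℓ, hc (i + 2) (by omega)]
  have hV : ∀ n, V (n + 1) = A n *ᵥ V n := fun n => by
    ext j
    fin_cases j <;> simp [V, A, hs, mul_comm]
  refine PowerSeries.exists_mul_mk_eq_coe_of_recurrence (transferProd A k ℓ).charpoly_monic hℓ
    (N := k) fun m hm => ?_
  simpa [V] using congrFun (sum_charpoly_coeff_smul_eq_zero hA hV hm) 1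

theorem generating_functions_rational_general
    (a : ℕ → ℕ)
    (p q : ℕ → ℤ)
    (hp : ∀ n, 2 ≤ n → p n = (a n : ℤ) * p (n - 1) + p (n - 2))
    (hq : ∀ n, 2 ≤ n → q n = (a n : ℤ) * q (n - 1) + q (n - 2))
    (ℓ k : ℕ) (hℓ : 1 ≤ ℓ)
    (hper : ∀ j, k < j → a (j + ℓ) = a j) :
    (∃ u v : Polynomial ℤ, v.coeff 0 = 1 ∧
      (v : PowerSeries ℤ) * PowerSeries.mk (fun n => p n) = (u : PowerSeries ℤ)) ∧
    (∃ u' v' : Polynomial ℤ, v'.coeff 0 = 1 ∧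
      (v' : PowerSeries ℤ) * PowerSeries.mk (fun n => q n) = (u' : PowerSeries ℤ)) := by
  have rational : ∀ s : ℕ → ℤ, (∀ n, 2 ≤ n → s n = (a n : ℤ) * s (n - 1) + s (n - 2)) →
      ∃ u v : Polynomial ℤ, v.coeff 0 = 1 ∧ (v : PowerSeries ℤ) * PowerSeries.mk s = u :=
    fun s hs => exists_mul_mk_eq_coe_of_continuant_of_periodic (c := fun n => (a n : ℤ)) hℓ
      (fun j hj => by rw [hper j hj]) fun n => hs (n + 2) (by omega)
  exact ⟨rational p hp, rational q hq⟩

/-- If the sequence of partial quotients `a` is eventually periodic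
(period `ℓ ≥ 1`, pre-period `k`), then the generating functions of the convergent
numerators `p` and denominators `q` are rational with integer coefficients. -/
theorem generating_functions_rational
    (a : ℕ → ℕ) (ha : ∀ j, 1 ≤ j → 1 ≤ a j)
    (p q : ℕ → ℤ)
    (hp0 : p 0 = 0) (hp1 : p 1 = 1)
    (hp : ∀ n, 2 ≤ n → p n = (a n : ℤ) * p (n - 1) + p (n - 2))
    (hq0 : q 0 = 1) (hq1 : q 1 = (a 1 : ℤ))
    (hq : ∀ n, 2 ≤ n → q n = (a n : ℤ) * q (n - 1) + q (n - 2))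
    (ℓ k : ℕ) (hℓ : 1 ≤ ℓ)
    (hper : ∀ j, k < j → a (j + ℓ) = a j) :
    (∃ u v : Polynomial ℤ, v.coeff 0 = 1 ∧
      (v : PowerSeries ℤ) * PowerSeries.mk (fun n => p n) = (u : PowerSeries ℤ)) ∧
    (∃ u' v' : Polynomial ℤ, v'.coeff 0 = 1 ∧
      (v' : PowerSeries ℤ) * PowerSeries.mk (fun n => q n) = (u' : PowerSeries ℤ)) :=
  generating_functions_rational_general a p q hp hq ℓ k hℓ hper
end

section
/- Suppose ℓ ≥ 1 is the minimal eventual period of a and k ≥ 0 is a pre-period, i.e., a(j+ℓ) = a(j) for all j > k. Let M₁ = ∏_{j=k+1}^{k+ℓ} [[0,1],[1,a(j)]] be the corresponding product of 2×2 real matrices (taken in increasing order of j) and let τ = tr(M₁). Then the Lévy constant exists and equals (1/ℓ) times the logarithm of the spectral radius of M₁; explicitly, lim_{n→∞} (log q(n))/n = (1/ℓ)·log( (τ + √(τ² − 4·(−1)^ℓ))/2 ), and (τ + √(τ² − 4·(−1)^ℓ))/2 is the largest absolute value of a (real) eigenvalue of M₁. -/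
/-!
Write `C x = !![0, 1; 1, x]`. The row vectors `(q (n - 1), q n)` satisfy
`(q n, q (n + 1)) = (q (n - 1), q n) * C (a (n + 1))`, so once the partial quotients are periodic,
passing from index `k + mℓ` to `k + (m + 1)ℓ` is right multiplication by `M`, and Cayley–Hamilton
gives `Q (m + 2) = τ Q (m + 1) - (-1)^ℓ Q m` for `Q m = q (k + mℓ)`. The entries of `M` are
positive, which forces `1 + (-1)^ℓ < τ`: the characteristic polynomial is negative at `1`, so its
roots satisfy `|μ| < 1 < λ`. Hence `Q m ~ A λ^m` with `A > 0`, and monotonicity of `q` controls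
`log q n` between consecutive terms of the progression `k + mℓ`.
-/

open Filter Topology Matrix

def cfMatrix {R : Type*} [Zero R] [One R] (x : R) : Matrix (Fin 2) (Fin 2) R :=
  !![0, 1; 1, x]

section CommRing

variable {R : Type*} [CommRing R]

theorem det_cfMatrix (x : R) : (cfMatrix x).det = -1 := by
  simp [cfMatrix, det_fin_two_of]

theorem cfMatrix_mul (x : R) (P : Matrix (Fin 2) (Fin 2) R) :
    cfMatrix x * P = !![P 1 0, P 1 1; P 0 0 + x * P 1 0, P 0 1 + x * P 1 1] := by
  ext i j
  fin_cases i <;> fin_cases j <;> simp [cfMatrix, mul_apply, Fin.sum_univ_two]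

theorem vecMul_cfMatrix (u v x : R) : ![u, v] ᵥ* cfMatrix x = ![v, u + v * x] := by
  ext i
  fin_cases i <;> simp [cfMatrix, vecMul, dotProduct, Fin.sum_univ_two]

theorem mul_self_eq_trace_smul_sub_det_smul (M : Matrix (Fin 2) (Fin 2) R) :
    M * M = M.trace • M - M.det • 1 := by
  ext i j
  fin_cases i <;> fin_cases j <;>
    simp [mul_apply, Fin.sum_univ_two, trace_fin_two, det_fin_two, one_apply] <;> ring

theorem vecMul_add_two_eq_of_vecMul_succ {y : ℕ → Fin 2 → R} {M : Matrix (Fin 2) (Fin 2) R}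
    (hy : ∀ m, y (m + 1) = y m ᵥ* M) (m : ℕ) :
    y (m + 2) = M.trace • y (m + 1) - M.det • y m := by
  rw [hy, hy, vecMul_vecMul, mul_self_eq_trace_smul_sub_det_smul, vecMul_sub, vecMul_smul,
    vecMul_smul, vecMul_one]

theorem det_sub_smul_one_fin_two (M : Matrix (Fin 2) (Fin 2) R) (μ : R) :
    (M - μ • 1).det = μ ^ 2 - M.trace * μ + M.det := by
  simp only [det_fin_two, trace_fin_two, Matrix.sub_apply, Matrix.smul_apply, one_apply,
    Fin.isValue, ↓reduceIte, smul_eq_mul, mul_one, mul_zero, sub_zero, zero_ne_one, one_ne_zero]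
  ring

end CommRing

theorem exists_mulVec_eq_smul_iff_fin_two {K : Type*} [Field K] (M : Matrix (Fin 2) (Fin 2) K)
    (μ : K) : (∃ v, v ≠ 0 ∧ M *ᵥ v = μ • v) ↔ μ ^ 2 - M.trace * μ + M.det = 0 := by
  have hsub : ∀ v, M *ᵥ v = μ • v ↔ (M - μ • 1) *ᵥ v = 0 := fun v => by
    rw [sub_mulVec, smul_mulVec, one_mulVec, sub_eq_zero]
  simp_rw [hsub, exists_mulVec_eq_zero_iff, det_sub_smul_one_fin_two]

-- The larger root of `X ^ 2 - τ * X + d`, when `4 * d ≤ τ ^ 2`.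
noncomputable def largerRoot (τ d : ℝ) : ℝ := (τ + √(τ ^ 2 - 4 * d)) / 2

section LargerRoot

variable {τ d : ℝ}

theorem largerRoot_mul_sub_largerRoot (h : 4 * d ≤ τ ^ 2) :
    largerRoot τ d * (τ - largerRoot τ d) = d := by
  have := Real.sq_sqrt (sub_nonneg.mpr h)
  unfold largerRoot
  linear_combination -this / 4

theorem abs_sub_two_lt_sqrt (h : 1 + d < τ) : |τ - 2| < √(τ ^ 2 - 4 * d) := by
  rw [← Real.sqrt_sq_eq_abs]
  exact Real.sqrt_lt_sqrt (sq_nonneg _) (by nlinarith)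

theorem one_lt_largerRoot (h : 1 + d < τ) : 1 < largerRoot τ d := by
  have := (abs_lt.mp (abs_sub_two_lt_sqrt h)).1
  unfold largerRoot
  linarith

theorem sub_largerRoot_lt_one (h : 1 + d < τ) : τ - largerRoot τ d < 1 := by
  have := (abs_lt.mp (abs_sub_two_lt_sqrt h)).2
  unfold largerRoot
  linarith

theorem abs_sub_largerRoot_lt (hd : -1 ≤ d) (h : 1 + d < τ) :
    |τ - largerRoot τ d| < largerRoot τ d := by
  have hs : 0 < √(τ ^ 2 - 4 * d) := (abs_nonneg _).trans_lt (abs_sub_two_lt_sqrt h)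
  unfold largerRoot
  rw [abs_lt]
  constructor <;> linarith

end LargerRoot

theorem exists_mulVec_eq_largerRoot_smul (M : Matrix (Fin 2) (Fin 2) ℝ)
    (h : 4 * M.det ≤ M.trace ^ 2) : ∃ v, v ≠ 0 ∧ M *ᵥ v = largerRoot M.trace M.det • v := by
  rw [exists_mulVec_eq_smul_iff_fin_two]
  linear_combination -largerRoot_mul_sub_largerRoot h

theorem abs_le_largerRoot_of_mulVec_eq_smul {M : Matrix (Fin 2) (Fin 2) ℝ} (hd : -1 ≤ M.det)
    (h : 1 + M.det < M.trace) {ν : ℝ} (hν : ∃ v, v ≠ 0 ∧ M *ᵥ v = ν • v) :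
    |ν| ≤ largerRoot M.trace M.det := by
  rw [exists_mulVec_eq_smul_iff_fin_two] at hν
  have hroot := largerRoot_mul_sub_largerRoot (by nlinarith [sq_nonneg (M.trace - 2)] :
    4 * M.det ≤ M.trace ^ 2)
  set lam := largerRoot M.trace M.det
  have hfactor : (ν - lam) * (ν - (M.trace - lam)) = 0 := by linear_combination hν + hroot
  rcases mul_eq_zero.mp hfactor with hν' | hν'
  · rw [sub_eq_zero.mp hν', abs_of_pos (by linarith [one_lt_largerRoot h])]
  · rw [sub_eq_zero.mp hν']
    exact (abs_sub_largerRoot_lt hd h).le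

theorem sub_mul_eq_of_recurrence {R : Type*} [CommRing R] {Q : ℕ → R} {lam μ : R}
    (hQ : ∀ m, Q (m + 2) = (lam + μ) * Q (m + 1) - lam * μ * Q m) (m : ℕ) :
    (lam - μ) * Q m = (Q 1 - μ * Q 0) * lam ^ m - (Q 1 - lam * Q 0) * μ ^ m := by
  induction m using Nat.twoStepInduction with
  | zero => ring
  | one => ring
  | more m ih₀ ih₁ =>
    rw [hQ]
    linear_combination (lam + μ) * ih₁ - lam * μ * ih₀

theorem tendsto_div_pow_of_recurrence {Q : ℕ → ℝ} {lam μ : ℝ} (hμ : |μ| < lam)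
    (hQ : ∀ m, Q (m + 2) = (lam + μ) * Q (m + 1) - lam * μ * Q m) :
    Tendsto (fun m => Q m / lam ^ m) atTop (𝓝 ((Q 1 - μ * Q 0) / (lam - μ))) := by
  have hlam : 0 < lam := (abs_nonneg μ).trans_lt hμ
  have hsub : 0 < lam - μ := by linarith [le_abs_self μ]
  have hratio : Tendsto (fun m => (μ / lam) ^ m) atTop (𝓝 0) := by
    apply tendsto_pow_atTop_nhds_zero_of_abs_lt_one
    rwa [abs_div, abs_of_pos hlam, div_lt_one hlam]
  have hlim :=
    ((hratio.const_mul (Q 1 - lam * Q 0)).const_sub (Q 1 - μ * Q 0)).div_const (lam - μ)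
  rw [mul_zero, sub_zero] at hlim
  refine hlim.congr fun m => ?_
  have hclosed := sub_mul_eq_of_recurrence hQ m
  rw [div_pow, div_eq_div_iff hsub.ne' (pow_pos hlam m).ne']
  field_simp
  linear_combination -hclosed

theorem tendsto_div_natCast_of_abs_sub_mul_le {f : ℕ → ℝ} {c C : ℝ}
    (h : ∀ᶠ n : ℕ in atTop, |f n - n * c| ≤ C) : Tendsto (fun n : ℕ => f n / n) atTop (𝓝 c) := by
  rw [← tendsto_sub_nhds_zero_iff]
  refine squeeze_zero_norm' ?_ (tendsto_const_div_atTop_nhds_zero_nat C)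
  filter_upwards [h, eventually_gt_atTop 0] with n hn hn0
  have hn0 : (0 : ℝ) < n := Nat.cast_pos.mpr hn0
  rw [Real.norm_eq_abs, show f n / n - c = (f n - n * c) / n by field_simp, abs_div,
    Nat.abs_cast]
  gcongr

theorem Monotone.tendsto_div_natCast_of_tendsto_sub_mul {u : ℕ → ℝ} (hu : Monotone u)
    {k ℓ : ℕ} (hℓ : 0 < ℓ) {L c : ℝ} (hL : 0 ≤ L)
    (h : Tendsto (fun m : ℕ => u (k + m * ℓ) - m * L) atTop (𝓝 c)) :
    Tendsto (fun n : ℕ => u n / n) atTop (𝓝 (L / ℓ)) := by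
  obtain ⟨C, hC⟩ := (Metric.isBounded_range_of_tendsto _ h).exists_norm_le
  simp only [Set.forall_mem_range, Real.norm_eq_abs] at hC
  have hkx : 0 ≤ k * (L / ℓ) := by positivity
  refine tendsto_div_natCast_of_abs_sub_mul_le (C := C + L + k * (L / ℓ)) ?_
  filter_upwards [eventually_ge_atTop k] with n hn
  set m := (n - k) / ℓ
  have hmod : m * ℓ + (n - k) % ℓ = n - k := by
    rw [mul_comm]
    exact Nat.div_add_mod (n - k) ℓ
  have hlt := Nat.mod_lt (n - k) hℓ
  have hlow : k + m * ℓ ≤ n := by omega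
  have hhigh : n ≤ k + (m + 1) * ℓ := by rw [add_one_mul]; omega
  have hu_low : m * L - C ≤ u n := by
    linarith [(abs_le.mp (hC m)).1, hu hlow]
  have hu_high : u n ≤ m * L + L + C := by
    have := (abs_le.mp (hC (m + 1))).2
    push_cast at this
    linarith [hu hhigh]
  have hn_low : k * (L / ℓ) + m * L ≤ n * (L / ℓ) := by
    have : ((k + m * ℓ : ℕ) : ℝ) * (L / ℓ) ≤ n * (L / ℓ) := by gcongr
    convert this using 1
    push_cast
    field_simp
  have hn_high : n * (L / ℓ) ≤ k * (L / ℓ) + m * L + L := by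
    have : (n : ℝ) * (L / ℓ) ≤ ((k + (m + 1) * ℓ : ℕ) : ℝ) * (L / ℓ) := by gcongr
    convert this using 1
    push_cast
    field_simp
    ring
  rw [abs_le]
  constructor <;> linarith

-- `cfWindow a s t = C (a (s + 1)) * ⋯ * C (a (s + t))`.
def cfWindow (a : ℕ → ℕ) (s t : ℕ) : Matrix (Fin 2) (Fin 2) ℝ :=
  ((List.range t).map fun i => cfMatrix (a (s + 1 + i) : ℝ)).prod

-- `(q (n - 1), q n)`, with the convention `q (-1) = 0`.
noncomputable def denomVec (q : ℕ → ℤ) (n : ℕ) : Fin 2 → ℝ :=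
  ![if n = 0 then 0 else (q (n - 1) : ℝ), q n]

section ContinuedFraction

variable {a : ℕ → ℕ} {q : ℕ → ℤ}

theorem cfWindow_succ (s t : ℕ) :
    cfWindow a s (t + 1) = cfWindow a s t * cfMatrix (a (s + 1 + t) : ℝ) := by
  simp [cfWindow, List.range_succ]

theorem cfWindow_succ' (s t : ℕ) :
    cfWindow a s (t + 1) = cfMatrix (a (s + 1) : ℝ) * cfWindow a (s + 1) t := by
  simp only [cfWindow, List.range_succ_eq_map, List.map_cons, List.prod_cons, List.map_map]
  congr 3
  funext i
  simp only [Function.comp_apply, Nat.succ_eq_add_one]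
  ring_nf

theorem det_cfWindow (s t : ℕ) : (cfWindow a s t).det = (-1) ^ t := by
  induction t with
  | zero => simp [cfWindow]
  | succ t ih => rw [cfWindow_succ, det_mul, ih, det_cfMatrix, pow_succ]

theorem cfWindow_add_mul_of_periodic {k ℓ : ℕ} (hper : ∀ j, k < j → a (j + ℓ) = a j) (m : ℕ) :
    cfWindow a (k + m * ℓ) ℓ = cfWindow a k ℓ := by
  have hb : Function.Periodic (fun i => a (k + 1 + i)) ℓ := fun i => by
    simpa [add_assoc] using hper (k + 1 + i) (by omega)
  unfold cfWindow
  refine congrArg _ (List.map_congr_left fun i _ => ?_)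
  have h := hb.nat_mul m i
  simp only [Nat.cast_id] at h
  rw [show k + m * ℓ + 1 + i = k + 1 + (i + m * ℓ) by ring, h]

theorem cfWindow_entries (ha : ∀ j, 1 ≤ j → 1 ≤ a j) (s t : ℕ) :
    0 ≤ cfWindow a s (t + 1) 0 0 ∧ 1 ≤ cfWindow a s (t + 1) 0 1 ∧
      1 ≤ cfWindow a s (t + 1) 1 0 ∧ 1 ≤ cfWindow a s (t + 1) 1 1 := by
  induction t generalizing s with
  | zero => simpa [cfWindow, cfMatrix] using ha (s + 1) (by omega)
  | succ t ih =>
    obtain ⟨h₀₀, h₀₁, h₁₀, h₁₁⟩ := ih (s + 1)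
    have hx : (1 : ℝ) ≤ a (s + 1) := by exact_mod_cast ha (s + 1) (by omega)
    rw [cfWindow_succ', cfMatrix_mul]
    simp only [of_apply, cons_val', cons_val_zero, cons_val_one, empty_val', cons_val_fin_one]
    refine ⟨by linarith, by linarith, by nlinarith, by nlinarith⟩

theorem one_add_neg_one_pow_lt_trace_cfWindow (ha : ∀ j, 1 ≤ j → 1 ≤ a j) (s : ℕ) {ℓ : ℕ}
    (hℓ : 0 < ℓ) : 1 + (-1) ^ ℓ < (cfWindow a s ℓ).trace := by
  obtain ⟨_ | t, rfl⟩ : ∃ t, ℓ = t + 1 := ⟨ℓ - 1, by omega⟩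
  · have hx : (0 : ℝ) < a (s + 1) := by exact_mod_cast ha (s + 1) (by omega)
    simpa [cfWindow, cfMatrix] using hx
  · obtain ⟨h₀₀, h₀₁, h₁₀, h₁₁⟩ := cfWindow_entries ha (s + 1) t
    have hx : (1 : ℝ) ≤ a (s + 1) := by exact_mod_cast ha (s + 1) (by omega)
    have hpow : (-1 : ℝ) ^ (t + 1 + 1) ≤ 1 := le_of_abs_le (abs_neg_one_pow _).le
    rw [cfWindow_succ', cfMatrix_mul, trace_fin_two]
    simp only [of_apply, cons_val', cons_val_zero, cons_val_one, empty_val', cons_val_fin_one]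
    nlinarith

theorem one_le_and_monotone_of_denom (ha : ∀ j, 1 ≤ j → 1 ≤ a j) (hq0 : q 0 = 1)
    (hq1 : q 1 = (a 1 : ℤ)) (hq : ∀ n, 2 ≤ n → q n = (a n : ℤ) * q (n - 1) + q (n - 2)) :
    (∀ n, 1 ≤ q n) ∧ Monotone q := by
  have key : ∀ n, 1 ≤ q n ∧ q n ≤ q (n + 1) := by
    intro n
    induction n with
    | zero => simpa [hq0, hq1] using ha 1 le_rfl
    | succ n ih =>
      have hx : (1 : ℤ) ≤ a (n + 2) := by exact_mod_cast ha (n + 2) (by omega)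
      refine ⟨ih.1.trans ih.2, ?_⟩
      have h := hq (n + 2) (by omega)
      simp only [show n + 2 - 1 = n + 1 by omega, Nat.add_sub_cancel] at h
      rw [show n + 1 + 1 = n + 2 by rfl, h]
      nlinarith [ih.1, ih.2]
  exact ⟨fun n => (key n).1, monotone_nat_of_le_succ fun n => (key n).2⟩

theorem denomVec_succ (hq0 : q 0 = 1) (hq1 : q 1 = (a 1 : ℤ))
    (hq : ∀ n, 2 ≤ n → q n = (a n : ℤ) * q (n - 1) + q (n - 2)) (n : ℕ) :
    denomVec q (n + 1) = denomVec q n ᵥ* cfMatrix (a (n + 1) : ℝ) := by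
  rcases n with _ | n
  · simp [denomVec, vecMul_cfMatrix, hq0, hq1]
  · rw [denomVec, denomVec, if_neg n.succ_ne_zero, if_neg (n + 1).succ_ne_zero, vecMul_cfMatrix,
      hq (n + 1 + 1) (by omega)]
    simp only [Nat.add_sub_cancel]
    push_cast
    ring_nf

theorem denomVec_add (hq0 : q 0 = 1) (hq1 : q 1 = (a 1 : ℤ))
    (hq : ∀ n, 2 ≤ n → q n = (a n : ℤ) * q (n - 1) + q (n - 2)) (s t : ℕ) :
    denomVec q (s + t) = denomVec q s ᵥ* cfWindow a s t := by
  induction t with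
  | zero => simp [cfWindow]
  | succ t ih =>
    rw [← add_assoc, denomVec_succ hq0 hq1 hq, ih, vecMul_vecMul, cfWindow_succ, add_right_comm]

theorem denom_add_two_mul_period (hq0 : q 0 = 1) (hq1 : q 1 = (a 1 : ℤ))
    (hq : ∀ n, 2 ≤ n → q n = (a n : ℤ) * q (n - 1) + q (n - 2)) {k ℓ : ℕ}
    (hper : ∀ j, k < j → a (j + ℓ) = a j) (m : ℕ) :
    (q (k + (m + 2) * ℓ) : ℝ) = (cfWindow a k ℓ).trace * q (k + (m + 1) * ℓ)
      - (cfWindow a k ℓ).det * q (k + m * ℓ) := by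
  have hstep : ∀ m, denomVec q (k + (m + 1) * ℓ) = denomVec q (k + m * ℓ) ᵥ* cfWindow a k ℓ :=
    fun m => by
      rw [add_one_mul, ← add_assoc, denomVec_add hq0 hq1 hq,
        cfWindow_add_mul_of_periodic hper]
  simpa [denomVec] using
    congrFun (vecMul_add_two_eq_of_vecMul_succ (y := fun m => denomVec q (k + m * ℓ)) hstep m) 1


theorem tendsto_log_denom_div (ha : ∀ j, 1 ≤ j → 1 ≤ a j) (hq0 : q 0 = 1)
    (hq1 : q 1 = (a 1 : ℤ)) (hq : ∀ n, 2 ≤ n → q n = (a n : ℤ) * q (n - 1) + q (n - 2))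
    {k ℓ : ℕ} (hℓ : 0 < ℓ) (hper : ∀ j, k < j → a (j + ℓ) = a j) :
    Tendsto (fun n : ℕ => Real.log (q n : ℝ) / n) atTop
      (𝓝 (Real.log (largerRoot (cfWindow a k ℓ).trace ((-1) ^ ℓ)) / ℓ)) := by
  obtain ⟨hq_pos, hq_mono⟩ := one_le_and_monotone_of_denom ha hq0 hq1 hq
  set τ := (cfWindow a k ℓ).trace
  have htr : 1 + (-1) ^ ℓ < τ := one_add_neg_one_pow_lt_trace_cfWindow ha k hℓ
  have hd : (-1 : ℝ) ≤ (-1) ^ ℓ := neg_le_of_abs_le (abs_neg_one_pow ℓ).le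
  have hlam_gt := one_lt_largerRoot htr
  have hμ_lt := sub_largerRoot_lt_one htr
  have hroot := largerRoot_mul_sub_largerRoot
    (by nlinarith [sq_nonneg (τ - 2)] : (4 : ℝ) * (-1) ^ ℓ ≤ τ ^ 2)
  set lam := largerRoot τ ((-1) ^ ℓ)
  set μ := τ - lam
  set Q : ℕ → ℝ := fun m => q (k + m * ℓ)
  have hrec : ∀ m, Q (m + 2) = (lam + μ) * Q (m + 1) - lam * μ * Q m := fun m => by
    rw [add_sub_cancel, hroot, ← det_cfWindow k ℓ]
    exact denom_add_two_mul_period hq0 hq1 hq hper m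
  have hQ_pos : ∀ m, 0 < Q m := fun m => by simp only [Q]; exact_mod_cast hq_pos _
  have hQ₀₁ : Q 0 ≤ Q 1 := by simp only [Q]; exact_mod_cast hq_mono (by omega)
  have hA : 0 < (Q 1 - μ * Q 0) / (lam - μ) :=
    div_pos (by nlinarith [hQ_pos 0]) (by linarith)
  have hlog : Tendsto (fun m : ℕ => Real.log (Q m) - m * Real.log lam) atTop
      (𝓝 (Real.log ((Q 1 - μ * Q 0) / (lam - μ)))) :=
    ((tendsto_div_pow_of_recurrence (abs_sub_largerRoot_lt hd htr) hrec).log hA.ne').congr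
      fun m => by rw [Real.log_div (hQ_pos m).ne' (by positivity), Real.log_pow]
  have hlog_mono : Monotone fun n => Real.log (q n : ℝ) := fun m n hmn =>
    Real.log_le_log (by exact_mod_cast hq_pos m) (by exact_mod_cast hq_mono hmn)
  exact hlog_mono.tendsto_div_natCast_of_tendsto_sub_mul hℓ (Real.log_nonneg hlam_gt.le) hlog

end ContinuedFraction

theorem levy_constant_eq_log_spectral_radius_general
    (a : ℕ → ℕ) (ha : ∀ j, 1 ≤ j → 1 ≤ a j)
    (q : ℕ → ℤ)
    (hq0 : q 0 = 1) (hq1 : q 1 = (a 1 : ℤ))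
    (hq : ∀ n, 2 ≤ n → q n = (a n : ℤ) * q (n - 1) + q (n - 2))
    (ℓ k : ℕ) (hℓ : 1 ≤ ℓ)
    (hper : ∀ j, k < j → a (j + ℓ) = a j)
    (M : Matrix (Fin 2) (Fin 2) ℝ)
    (hM : M = ((List.range ℓ).map (fun i => !![(0 : ℝ), 1; 1, (a (k + 1 + i) : ℝ)])).prod)
    (τ : ℝ) (hτ : τ = Matrix.trace M)
    (lam : ℝ) (hlam : lam = (τ + Real.sqrt (τ ^ 2 - 4 * (-1 : ℝ) ^ ℓ)) / 2) :
    Tendsto (fun n : ℕ => Real.log (q n : ℝ) / n) atTop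
        (nhds ((1 / (ℓ : ℝ)) * Real.log lam)) ∧
    (∃ v : Fin 2 → ℝ, v ≠ 0 ∧ M.mulVec v = lam • v) ∧
    (∀ μ : ℝ, (∃ v : Fin 2 → ℝ, v ≠ 0 ∧ M.mulVec v = μ • v) → |μ| ≤ lam) := by
  change M = cfWindow a k ℓ at hM
  change lam = largerRoot τ ((-1) ^ ℓ) at hlam
  subst hM hτ hlam
  have hdet := det_cfWindow (a := a) k ℓ
  have htr := one_add_neg_one_pow_lt_trace_cfWindow ha k hℓ
  have hd : -1 ≤ (cfWindow a k ℓ).det := hdet ▸ neg_le_of_abs_le (abs_neg_one_pow ℓ).le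
  refine ⟨?_, ?_, fun ν hν => ?_⟩
  · rw [one_div_mul_eq_div]
    exact tendsto_log_denom_div ha hq0 hq1 hq hℓ hper
  · rw [← hdet]
    exact exists_mulVec_eq_largerRoot_smul _ (by nlinarith [sq_nonneg ((cfWindow a k ℓ).trace - 2)])
  · rw [← hdet] at htr ⊢
    exact abs_le_largerRoot_of_mulVec_eq_smul hd htr hν

/-- For eventually periodic partial quotients with minimal period `ℓ`
and pre-period `k`, the Lévy constant `lim (log q n)/n` exists and equals
`(1/ℓ)·log` of the spectral radius of `M₁ = ∏_{j=k+1}^{k+ℓ} [[0,1],[1,a j]]`,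
which is `(τ + √(τ² − 4(−1)^ℓ))/2` with `τ = tr M₁`; this number is the largest
absolute value of a real eigenvalue of `M₁`. -/
theorem levy_constant_eq_log_spectral_radius
    (a : ℕ → ℕ) (ha : ∀ j, 1 ≤ j → 1 ≤ a j)
    (p q : ℕ → ℤ)
    (hp0 : p 0 = 0) (hp1 : p 1 = 1)
    (hp : ∀ n, 2 ≤ n → p n = (a n : ℤ) * p (n - 1) + p (n - 2))
    (hq0 : q 0 = 1) (hq1 : q 1 = (a 1 : ℤ))
    (hq : ∀ n, 2 ≤ n → q n = (a n : ℤ) * q (n - 1) + q (n - 2))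
    (ℓ k : ℕ) (hℓ : 1 ≤ ℓ)
    (hper : ∀ j, k < j → a (j + ℓ) = a j)
    (hmin : ∀ ℓ', 1 ≤ ℓ' → ℓ' < ℓ → ¬ ∃ N, ∀ j, N ≤ j → a (j + ℓ') = a j)
    (M : Matrix (Fin 2) (Fin 2) ℝ)
    (hM : M = ((List.range ℓ).map (fun i => !![(0 : ℝ), 1; 1, (a (k + 1 + i) : ℝ)])).prod)
    (τ : ℝ) (hτ : τ = Matrix.trace M)
    (lam : ℝ) (hlam : lam = (τ + Real.sqrt (τ ^ 2 - 4 * (-1 : ℝ) ^ ℓ)) / 2) :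
    Tendsto (fun n : ℕ => Real.log (q n : ℝ) / n) atTop
        (nhds ((1 / (ℓ : ℝ)) * Real.log lam)) ∧
    (∃ v : Fin 2 → ℝ, v ≠ 0 ∧ M.mulVec v = lam • v) ∧
    (∀ μ : ℝ, (∃ v : Fin 2 → ℝ, v ≠ 0 ∧ M.mulVec v = μ • v) → |μ| ≤ lam) :=
  levy_constant_eq_log_spectral_radius_general a ha q hq0 hq1 hq ℓ k hℓ hper M hM τ hτ lam hlam
end

section
/- For all integers m ≥ 1 and n ≥ m+1, the convergent numerators and denominators satisfy (−1)^{m+1}·p(n−m−1) = p(n)·A^{(m−1)}_{n−m} − p(n−1)·A^{(m)}_{n−m} and (−1)^{m+1}·q(n−m−1) = q(n)·A^{(m−1)}_{n−m} − q(n−1)·A^{(m)}_{n−m}. -/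
/-- `A^{(m)}_r`: the (2,2)-entry of the matrix product `∏_{j=r+1}^{r+m} [[0,1],[1,a j]]`
(taken in increasing order of `j`; the empty product is the identity). -/
def Acoef (a : ℕ → ℕ) (m r : ℕ) : ℤ :=
  (((List.range m).map (fun i => !![(0 : ℤ), 1; 1, (a (r + 1 + i) : ℤ)])).prod) 1 1

def Pmat (a : ℕ → ℕ) (m r : ℕ) : Matrix (Fin 2) (Fin 2) ℤ :=
  ((List.range m).map (fun i => !![(0 : ℤ), 1; 1, (a (r + 1 + i) : ℤ)])).prod

lemma Pmat_succ (a : ℕ → ℕ) (m r : ℕ) :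
    Pmat a (m + 1) r = Pmat a m r * !![(0 : ℤ), 1; 1, (a (r + 1 + m) : ℤ)] := by
  simp [Pmat, List.range_succ]

lemma Acoef_eq (a : ℕ → ℕ) (m r : ℕ) : Acoef a m r = Pmat a m r 1 1 := rfl

lemma Pmat_succ_c0 (a : ℕ → ℕ) (m r : ℕ) (i : Fin 2) :
    Pmat a (m + 1) r i 0 = Pmat a m r i 1 := by
  rw [Pmat_succ]
  simp [Matrix.mul_apply, Fin.sum_univ_two]

lemma Pmat_succ_c1 (a : ℕ → ℕ) (m r : ℕ) (i : Fin 2) :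
    Pmat a (m + 1) r i 1 = Pmat a m r i 0 + Pmat a m r i 1 * (a (r + 1 + m) : ℤ) := by
  rw [Pmat_succ]
  simp [Matrix.mul_apply, Fin.sum_univ_two]

lemma Pmat_det (a : ℕ → ℕ) (m r : ℕ) : (Pmat a m r).det = (-1 : ℤ) ^ m := by
  induction m with
  | zero => simp [Pmat]
  | succ k ih =>
      rw [Pmat_succ, Matrix.det_mul, ih, Matrix.det_fin_two_of]
      ring

lemma vec_lemma (a : ℕ → ℕ) (f : ℕ → ℤ)
    (hf : ∀ n, 2 ≤ n → f n = (a n : ℤ) * f (n - 1) + f (n - 2)) :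
    ∀ m r, 1 ≤ r →
      f (m + r) = Pmat a m r 0 1 * f (r - 1) + Pmat a m r 1 1 * f r ∧
      f (m + r - 1) = Pmat a m r 0 0 * f (r - 1) + Pmat a m r 1 0 * f r := by
  intro m
  induction m with
  | zero =>
      intro r hr
      constructor <;> simp [Pmat, Matrix.one_apply]
  | succ k ih =>
      intro r hr
      obtain ⟨h1, h2⟩ := ih r hr
      have hrec := hf (k + 1 + r) (by omega)
      have e1 : k + 1 + r - 1 = k + r := by omega
      have e2 : k + 1 + r - 2 = k + r - 1 := by omega
      rw [e1, e2, h1, h2] at hrec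
      constructor
      · rw [hrec, Pmat_succ_c1, Pmat_succ_c1]
        ring
      · rw [e1, h1, Pmat_succ_c0, Pmat_succ_c0]

/-- backward splitting relations for the convergents:
`(−1)^{m+1}·p(n−m−1) = p(n)·A^{(m−1)}_{n−m} − p(n−1)·A^{(m)}_{n−m}` and likewise for `q`. -/
theorem convergents_backward_splitting
    (a : ℕ → ℕ) (ha : ∀ j, 1 ≤ j → 1 ≤ a j)
    (p q : ℕ → ℤ)
    (hp0 : p 0 = 0) (hp1 : p 1 = 1)
    (hp : ∀ n, 2 ≤ n → p n = (a n : ℤ) * p (n - 1) + p (n - 2))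
    (hq0 : q 0 = 1) (hq1 : q 1 = (a 1 : ℤ))
    (hq : ∀ n, 2 ≤ n → q n = (a n : ℤ) * q (n - 1) + q (n - 2)) :
    ∀ m n : ℕ, 1 ≤ m → m + 1 ≤ n →
      (-1 : ℤ) ^ (m + 1) * p (n - m - 1)
          = p n * Acoef a (m - 1) (n - m) - p (n - 1) * Acoef a m (n - m) ∧
      (-1 : ℤ) ^ (m + 1) * q (n - m - 1)
          = q n * Acoef a (m - 1) (n - m) - q (n - 1) * Acoef a m (n - m) := by
  intro m n hm hn
  obtain ⟨k, rfl⟩ : ∃ k, m = k + 1 := ⟨m - 1, by omega⟩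
  set r := n - (k + 1) with hr_def
  have hr : 1 ≤ r := by omega
  have hn' : n = (k + 1) + r := by omega
  have hnm1 : n - (k + 1) - 1 = r - 1 := by omega
  have hAk : Acoef a (k + 1 - 1) r = Pmat a (k + 1) r 1 0 := by
    rw [Pmat_succ_c0]; rfl
  have hdet := Pmat_det a (k + 1) r
  rw [Matrix.det_fin_two] at hdet
  constructor
  · obtain ⟨h1, h2⟩ := vec_lemma a p hp (k + 1) r hr
    rw [hnm1, hAk, Acoef_eq, hn', h1, h2]
    linear_combination (p (r - 1)) * hdet
  · obtain ⟨h1, h2⟩ := vec_lemma a q hq (k + 1) r hr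
    rw [hnm1, hAk, Acoef_eq, hn', h1, h2]
    linear_combination (q (r - 1)) * hdet
end

section
/- For all integers m ≥ 1 and n ≥ m+2, one has A^{(m−1)}_{n−m} + A^{(m+1)}_{n−m−1} = (−1)^{n−m−1}·( q(n−m−1)·p(n−1) − p(n−m−1)·q(n−1) − q(n−m−2)·p(n) + p(n−m−2)·q(n) ). -/
lemma det_aux (a : ℕ → ℕ) (p q : ℕ → ℤ)
    (hp0 : p 0 = 0) (hp1 : p 1 = 1)
    (hp : ∀ n, 2 ≤ n → p n = (a n : ℤ) * p (n - 1) + p (n - 2))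
    (hq0 : q 0 = 1) (hq1 : q 1 = (a 1 : ℤ))
    (hq : ∀ n, 2 ≤ n → q n = (a n : ℤ) * q (n - 1) + q (n - 2)) :
    ∀ s : ℕ, p s * q (s + 1) - q s * p (s + 1) = (-1 : ℤ) ^ (s + 1) := by
  intro s
  induction s with
  | zero => simp [hp0, hp1, hq0, hq1]
  | succ s ih =>
      have hps := hp (s + 2) (by omega)
      have hqs := hq (s + 2) (by omega)
      simp only [show s + 2 - 1 = s + 1 by omega, show s + 2 - 2 = s by omega] at hps hqs
      have : p (s+1) * q (s+1+1) - q (s+1) * p (s+1+1)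
          = -(p s * q (s + 1) - q s * p (s + 1)) := by
        rw [show s+1+1 = s+2 by rfl, hps, hqs]; ring
      rw [this, ih]; ring

lemma key_aux (a : ℕ → ℕ) (p q : ℕ → ℤ)
    (hp0 : p 0 = 0) (hp1 : p 1 = 1)
    (hp : ∀ n, 2 ≤ n → p n = (a n : ℤ) * p (n - 1) + p (n - 2))
    (hq0 : q 0 = 1) (hq1 : q 1 = (a 1 : ℤ))
    (hq : ∀ n, 2 ≤ n → q n = (a n : ℤ) * q (n - 1) + q (n - 2)) :
    ∀ m s : ℕ,
      (((List.range m).map (fun i => !![(0 : ℤ), 1; 1, (a (s + 2 + i) : ℤ)])).prod) 1 1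
        = (-1 : ℤ) ^ (s + 1) * (p s * q (s + 1 + m) - q s * p (s + 1 + m)) ∧
      (((List.range m).map (fun i => !![(0 : ℤ), 1; 1, (a (s + 2 + i) : ℤ)])).prod) 1 0
        = (-1 : ℤ) ^ (s + 1) * (p s * q (s + m) - q s * p (s + m)) := by
  intro m s
  induction m with
  | zero =>
      constructor
      · simp only [List.range_zero, List.map_nil, List.prod_nil, Matrix.one_apply_eq, Nat.add_zero]
        rw [det_aux a p q hp0 hp1 hp hq0 hq1 hq s, ← pow_add,
          show s + 1 + (s + 1) = 2 * (s + 1) by omega, pow_mul]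
        norm_num
      · simp [Matrix.one_apply]; ring
  | succ m ih =>
      obtain ⟨ih1, ih0⟩ := ih
      have hps := hp (s + m + 2) (by omega)
      have hqs := hq (s + m + 2) (by omega)
      simp only [show s + m + 2 - 1 = s + m + 1 by omega,
        show s + m + 2 - 2 = s + m by omega] at hps hqs
      rw [List.range_succ, List.map_append, List.prod_append]
      simp only [List.map_cons, List.map_nil, List.prod_cons, List.prod_nil, mul_one]
      constructor
      · simp only [Matrix.mul_apply, Fin.sum_univ_two, Matrix.cons_val', Matrix.cons_val_zero,
          Matrix.cons_val_one, Matrix.head_cons, Matrix.head_fin_const, Matrix.empty_val',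
          Matrix.cons_val_fin_one, Matrix.of_apply]
        rw [ih1, ih0]
        rw [show s + 1 + (m + 1) = s + m + 2 by omega, hps, hqs,
          show s + 2 + m = s + m + 2 by omega, show s + 1 + m = s + m + 1 by omega]
        ring
      · simp only [Matrix.mul_apply, Fin.sum_univ_two, Matrix.cons_val', Matrix.cons_val_zero,
          Matrix.cons_val_one, Matrix.head_cons, Matrix.head_fin_const, Matrix.empty_val',
          Matrix.cons_val_fin_one, Matrix.of_apply]
        rw [ih1, ih0]
        rw [show s + (m + 1) = s + 1 + m by omega]
        ring

/-- trace formula relating the coefficients `A^{(m)}_r` to the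
convergent numerators and denominators. -/
theorem trace_Acoef_eq_convergents
    (a : ℕ → ℕ) (ha : ∀ j, 1 ≤ j → 1 ≤ a j)
    (p q : ℕ → ℤ)
    (hp0 : p 0 = 0) (hp1 : p 1 = 1)
    (hp : ∀ n, 2 ≤ n → p n = (a n : ℤ) * p (n - 1) + p (n - 2))
    (hq0 : q 0 = 1) (hq1 : q 1 = (a 1 : ℤ))
    (hq : ∀ n, 2 ≤ n → q n = (a n : ℤ) * q (n - 1) + q (n - 2)) :
    ∀ m n : ℕ, 1 ≤ m → m + 2 ≤ n →
      Acoef a (m - 1) (n - m) + Acoef a (m + 1) (n - m - 1)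
        = (-1 : ℤ) ^ (n - m - 1) *
            (q (n - m - 1) * p (n - 1) - p (n - m - 1) * q (n - 1)
              - q (n - m - 2) * p n + p (n - m - 2) * q n) := by
  intro m n hm hn
  obtain ⟨m', rfl⟩ : ∃ m', m = m' + 1 := ⟨m - 1, by omega⟩
  obtain ⟨t, rfl⟩ : ∃ t, n = t + m' + 3 := ⟨n - m' - 3, by omega⟩
  have e1 : t + m' + 3 - (m' + 1) = t + 2 := by omega
  have e2 : t + m' + 3 - (m' + 1) - 1 = t + 1 := by omega
  have e3 : t + m' + 3 - (m' + 1) - 2 = t := by omega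
  have e4 : t + m' + 3 - 1 = t + m' + 2 := by omega
  rw [e2, e3, e4, e1, show m' + 1 - 1 = m' by omega]
  have h1 := (key_aux a p q hp0 hp1 hp hq0 hq1 hq m' (t + 1)).1
  have h2 := (key_aux a p q hp0 hp1 hp hq0 hq1 hq (m' + 2) t).1
  unfold Acoef
  rw [show t + 2 + 1 = t + 1 + 2 by omega] at h1 ⊢
  rw [show t + 1 + 1 = t + 2 by omega]
  rw [h1, h2]
  rw [show t + 1 + 1 + m' = t + m' + 2 by omega,
    show t + 1 + (m' + 2) = t + m' + 3 by omega]
  ring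
end

section
/- Let ℓ ≥ 1 and k ≥ ℓ be integers. Then for every real number z with 0 < z < 1, one has ∑_{n=k}^{k+ℓ} zⁿ·( q(n) + (−1)^{ℓ+1}·z^ℓ·q(n−ℓ) ) > 0. -/
/-- positivity of the numerator polynomial
`∑_{n=k}^{k+ℓ} zⁿ·(q(n) + (−1)^{ℓ+1}·z^ℓ·q(n−ℓ))` on `(0,1)`. -/
theorem numerator_positive_on_unit_interval
    (a : ℕ → ℕ) (ha : ∀ j, 1 ≤ j → 1 ≤ a j)
    (q : ℕ → ℤ)
    (hq0 : q 0 = 1) (hq1 : q 1 = (a 1 : ℤ))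
    (hq : ∀ n, 2 ≤ n → q n = (a n : ℤ) * q (n - 1) + q (n - 2))
    (ℓ k : ℕ) (hℓ : 1 ≤ ℓ) (hkℓ : ℓ ≤ k) :
    ∀ z : ℝ, 0 < z → z < 1 →
      0 < ∑ n ∈ Finset.Icc k (k + ℓ),
            z ^ n * ((q n : ℝ) + (-1 : ℝ) ^ (ℓ + 1) * z ^ ℓ * (q (n - ℓ) : ℝ)) := by
  intro z hz hz1
  have hqpos : ∀ n, 1 ≤ q n := by
    intro n
    induction n using Nat.strong_induction_on with
    | _ n ih =>
      match n with
      | 0 => simp [hq0]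
      | 1 => rw [hq1]; exact_mod_cast ha 1 le_rfl
      | (m+2) =>
        rw [hq (m+2) (by omega)]
        have h1 := ih (m+1) (by omega)
        have h2 := ih m (by omega)
        have ha' : (1:ℤ) ≤ (a (m+2) : ℤ) := by exact_mod_cast ha (m+2) (by omega)
        simp only [show m+2-1 = m+1 from rfl, show m+2-2 = m from rfl]
        nlinarith
  have hmono : ∀ m n, m ≤ n → q m ≤ q n := by
    have step : ∀ n, q n ≤ q (n+1) := by
      intro n
      match n with
      | 0 => rw [hq0, hq1]; exact_mod_cast ha 1 le_rfl
      | (m+1) =>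
        rw [hq (m+2) (by omega)]
        have h1 := hqpos (m+1)
        have h2 := hqpos m
        have ha' : (1:ℤ) ≤ (a (m+2) : ℤ) := by exact_mod_cast ha (m+2) (by omega)
        simp only [show m+2-1 = m+1 from rfl, show m+2-2 = m from rfl]
        nlinarith
    exact fun m n hmn => monotone_nat_of_le_succ step hmn
  apply Finset.sum_pos
  · intro n hn
    simp only [Finset.mem_Icc] at hn
    have hzn : 0 < z ^ n := pow_pos hz n
    have hzl : z ^ ℓ < 1 := pow_lt_one₀ hz.le hz1 (by omega)
    have hzlpos : 0 < z ^ ℓ := pow_pos hz ℓ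
    have hq1' : (1:ℝ) ≤ (q (n-ℓ) : ℝ) := by exact_mod_cast hqpos (n-ℓ)
    have hqle : (q (n-ℓ) : ℝ) ≤ (q n : ℝ) := by exact_mod_cast hmono _ _ (by omega)
    apply mul_pos hzn
    rcases Nat.even_or_odd ℓ with he | ho
    · have hsgn : (-1:ℝ) ^ (ℓ+1) = -1 := Odd.neg_one_pow (Even.add_one he)
      rw [hsgn]
      nlinarith
    · have hsgn : (-1:ℝ) ^ (ℓ+1) = 1 := Even.neg_one_pow (Odd.add_one ho)
      rw [hsgn]
      nlinarith
  · exact Finset.nonempty_Icc.mpr (by omega)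
end

section
/- Let ℓ ≥ 1 and let b₁, …, b_ℓ be positive integers. Let τ be the trace of the 2×2 integer matrix ∏_{j=1}^{ℓ} [[0,1],[1,b_j]] (product taken in increasing order of j). Then the real quadratic polynomial v(ξ) = 1 − τ·ξ + (−1)^ℓ·ξ² has two real roots; exactly one of them lies in the open interval (0,1), and the other has absolute value strictly greater than 1. In particular the root of v of smallest modulus is a positive real number in (0,1). -/
lemma entries_bound : ∀ (L : List ℤ) (b : ℤ), 1 ≤ b → (∀ c ∈ L, 1 ≤ c) →
    ∀ M, M = ((b :: L).map fun c => !![(0:ℤ),1;1,c]).prod →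
    (0 ≤ M 0 0 ∧ M 0 0 ≤ M 1 0 ∧ 1 ≤ M 1 0 ∧ 1 ≤ M 0 1 ∧ M 0 1 ≤ M 1 1) ∧
    (L ≠ [] → 1 ≤ M 0 0 ∧ 2 ≤ M 1 1) := by
  intro L
  induction L with
  | nil =>
    intro b hb _ M hM
    subst hM
    simp
    omega
  | cons c L ih =>
    intro b hb hc M hM
    obtain ⟨⟨h1, h2, h3, h4, h5⟩, -⟩ :=
      ih c (hc c (by simp)) (fun d hd => hc d (by simp [hd])) _ rfl
    set M' := ((c :: L).map fun c => !![(0:ℤ),1;1,c]).prod with hM'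
    have e : M = !![(0:ℤ),1;1,b] * M' := by
      rw [hM, List.map_cons, List.prod_cons]
    have e00 : M 0 0 = M' 1 0 := by rw [e]; simp [Matrix.mul_apply, Fin.sum_univ_two]
    have e01 : M 0 1 = M' 1 1 := by rw [e]; simp [Matrix.mul_apply, Fin.sum_univ_two]
    have e10 : M 1 0 = M' 0 0 + b * M' 1 0 := by rw [e]; simp [Matrix.mul_apply, Fin.sum_univ_two]
    have e11 : M 1 1 = M' 0 1 + b * M' 1 1 := by rw [e]; simp [Matrix.mul_apply, Fin.sum_univ_two]
    constructor
    · refine ⟨by omega, ?_, ?_, by omega, ?_⟩ <;> nlinarith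
    · intro _
      refine ⟨by omega, ?_⟩
      nlinarith

/-- for positive integers `b₁, …, b_ℓ` with
`τ = tr ∏_{j=1}^{ℓ} [[0,1],[1,b j]]`, the real polynomial
`v(ξ) = 1 − τ·ξ + (−1)^ℓ·ξ²` has two real roots, exactly one of which lies in
`(0,1)`, the other having absolute value greater than `1`. -/
theorem reciprocal_char_poly_roots
    (ℓ : ℕ) (hℓ : 1 ≤ ℓ) (b : Fin ℓ → ℕ) (hb : ∀ j, 1 ≤ b j)
    (τ : ℤ)
    (hτ : τ = Matrix.trace ((List.ofFn (fun j => !![(0 : ℤ), 1; 1, (b j : ℤ)])).prod)) :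
    ∃ x y : ℝ, x ≠ y ∧
      1 - (τ : ℝ) * x + (-1 : ℝ) ^ ℓ * x ^ 2 = 0 ∧
      1 - (τ : ℝ) * y + (-1 : ℝ) ^ ℓ * y ^ 2 = 0 ∧
      x ∈ Set.Ioo (0 : ℝ) 1 ∧ 1 < |y| ∧
      ∀ z : ℝ, 1 - (τ : ℝ) * z + (-1 : ℝ) ^ ℓ * z ^ 2 = 0 → z = x ∨ z = y := by
  -- step 1: bounds on τ
  obtain ⟨ℓ', rfl⟩ : ∃ n, ℓ = n + 1 := ⟨ℓ - 1, by omega⟩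
  have hτ1 : 1 ≤ τ ∧ (1 ≤ ℓ' → 3 ≤ τ) := by
    have hlist : List.ofFn (fun j => !![(0 : ℤ), 1; 1, (b j : ℤ)]) =
        ((b 0 : ℤ) :: List.ofFn (fun j : Fin ℓ' => ((b j.succ : ℤ)))).map
          (fun c => !![(0:ℤ),1;1,c]) := by
      rw [List.map_cons, List.map_ofFn, List.ofFn_succ]; rfl
    obtain ⟨⟨h1, h2, h3, h4, h5⟩, h6⟩ :=
      entries_bound (List.ofFn (fun j : Fin ℓ' => ((b j.succ : ℤ)))) (b 0 : ℤ)
        (by exact_mod_cast hb 0)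
        (by
          intro c hc
          rw [List.mem_ofFn] at hc
          obtain ⟨j, rfl⟩ := hc
          show (1:ℤ) ≤ ((b j.succ : ℕ) : ℤ); exact_mod_cast hb j.succ)
        _ rfl
    rw [hlist, Matrix.trace_fin_two] at hτ
    constructor
    · omega
    · intro h
      have hne : List.ofFn (fun j : Fin ℓ' => ((b j.succ : ℤ))) ≠ [] := by
        intro hcontra
        apply_fun List.length at hcontra
        simp at hcontra
        omega
      obtain ⟨ha, hb'⟩ := h6 hne
      omega
  obtain ⟨hτ1, hτ3⟩ := hτ1
  clear hτ hb b
  set t : ℝ := (τ : ℝ) with ht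
  have ht1 : (1 : ℝ) ≤ t := by rw [ht]; exact_mod_cast hτ1
  rcases Nat.even_or_odd (ℓ' + 1) with hpar | hpar
  · -- even case: ℓ' + 1 even, so ℓ' ≥ 1 and τ ≥ 3
    have ht3 : (3 : ℝ) ≤ t := by
      have : 1 ≤ ℓ' := by
        rcases Nat.eq_zero_or_pos ℓ' with h | h
        · exfalso; rw [h] at hpar; simp [Nat.even_iff] at hpar
        · exact h
      rw [ht]; exact_mod_cast hτ3 this
    have hpow : (-1 : ℝ) ^ (ℓ' + 1) = 1 := hpar.neg_one_pow
    rw [hpow]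
    set d : ℝ := Real.sqrt (t ^ 2 - 4) with hd
    have hd2 : d ^ 2 = t ^ 2 - 4 := Real.sq_sqrt (by nlinarith)
    have hd0 : 0 < d := Real.sqrt_pos.mpr (by nlinarith)
    refine ⟨(t - d) / 2, (t + d) / 2, by intro h; nlinarith, by linear_combination hd2 / 4,
      by linear_combination hd2 / 4, ⟨?_, ?_⟩, ?_, ?_⟩
    · nlinarith
    · nlinarith [sq_nonneg (t - 2 - d)]
    · rw [abs_of_pos (by nlinarith)]; nlinarith
    · intro z hz
      have : (z - (t - d) / 2) * (z - (t + d) / 2) = 0 := by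
        linear_combination hz - hd2 / 4
      rcases mul_eq_zero.mp this with h | h
      · left; linarith [sub_eq_zero.mp h]
      · right; linarith [sub_eq_zero.mp h]
  · -- odd case
    have hpow : (-1 : ℝ) ^ (ℓ' + 1) = -1 := hpar.neg_one_pow
    rw [hpow]
    set d : ℝ := Real.sqrt (t ^ 2 + 4) with hd
    have hd2 : d ^ 2 = t ^ 2 + 4 := Real.sq_sqrt (by nlinarith)
    have hd0 : 0 < d := Real.sqrt_pos.mpr (by nlinarith)
    have hdt : t < d := by nlinarith
    have hd2' : 2 < d := by nlinarith
    refine ⟨(d - t) / 2, -(t + d) / 2, by intro h; nlinarith,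
      by linear_combination -hd2 / 4, by linear_combination -hd2 / 4, ⟨?_, ?_⟩, ?_, ?_⟩
    · nlinarith
    · nlinarith [sq_nonneg (t + 2 - d)]
    · rw [abs_of_neg (by nlinarith)]; nlinarith
    · intro z hz
      have : (z - (d - t) / 2) * (z - -(t + d) / 2) = 0 := by
        linear_combination -hz - hd2 / 4
      rcases mul_eq_zero.mp this with h | h
      · left; linarith [sub_eq_zero.mp h]
      · right; linarith [sub_eq_zero.mp h]
end

section
/- Let ℓ ≥ 1, let C be an ℓ×ℓ complex matrix with columns C₁, …, C_ℓ, and for each s ∈ {1,…,ℓ} and p ∈ {0,1,2} let γ_s^p ∈ ℂ. For z ∈ ℂ let N(z) be the ℓ×ℓ complex matrix whose s-th column is γ_s^0·C_s + γ_s^1·z·C_{s+1} + γ_s^2·z²·C_{s+2}, where the column indices s+1, s+2 are taken modulo ℓ (in {1,…,ℓ}). Then there exists v₁ ∈ ℂ, independent of z, such that for all z ∈ ℂ: det N(z) = det C · ( ∏_{s=1}^{ℓ} γ_s^0 + v₁·z^ℓ + (∏_{s=1}^{ℓ} γ_s^2)·z^{2ℓ} ). -/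
/-!
`N(z) = C * M(z)` with `M(z) = S₀ + z S₁ + z² S₂`, where `S_p` carries `γ_s^p` at position
`(s + p, s)`. For a primitive `ℓ`-th root of unity `ω`, conjugating `M(z)` by `diag(ω^i)` gives
`M(ωz)`, so the polynomial `det M(X)`, of degree at most `2ℓ`, only has monomials of degree `0`,
`ℓ` and `2ℓ`. Its constant coefficient is `det S₀ = ∏ γ_s^0` and its coefficient of `X^{2ℓ}` is
`det S₂ = ∏ γ_s^2`, since `S₂` is a diagonal matrix times the square of a cyclic permutation.
-/

open Polynomial Matrix

section DetOfPolynomialMatrix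

variable {R : Type*} [CommRing R] {n : Type*} [Fintype n] [DecidableEq n]

theorem Matrix.natDegree_det_le_of_natDegree_le (M : Matrix n n R[X]) {d : ℕ}
    (h : ∀ i j, (M i j).natDegree ≤ d) : M.det.natDegree ≤ Fintype.card n * d := by
  rw [det_apply]
  refine natDegree_sum_le_of_forall_le _ _ fun σ _ => ?_
  refine (natDegree_smul_le _ _).trans ((natDegree_prod_le _ _).trans ?_)
  exact (Finset.sum_le_card_nsmul _ _ d fun i _ => h (σ i) i).trans_eq (by simp)

theorem Matrix.coeff_det_of_natDegree_le (M : Matrix n n R[X]) {d : ℕ}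
    (h : ∀ i j, (M i j).natDegree ≤ d) :
    M.det.coeff (Fintype.card n * d) = (M.map (coeff · d)).det := by
  rw [det_apply, det_apply, finsetSum_coeff]
  refine Finset.sum_congr rfl fun σ _ => ?_
  rw [coeff_smul, ← Finset.card_univ, coeff_prod_of_natDegree_le (h := fun i _ => h (σ i) i)]
  rfl

end DetOfPolynomialMatrix

section QuadraticPencil

variable {R : Type*} [CommRing R] {n : Type*}

noncomputable def quadraticPencil (A B E : Matrix n n R) : Matrix n n R[X] :=
  A.map C + (X : R[X]) • B.map C + (X : R[X]) ^ 2 • E.map C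

variable (A B E : Matrix n n R)

theorem natDegree_quadraticPencil_apply_le (i j : n) :
    (quadraticPencil A B E i j).natDegree ≤ 2 := by
  simp only [quadraticPencil, Matrix.add_apply, Matrix.smul_apply, map_apply, smul_eq_mul]
  compute_degree

variable [Fintype n] [DecidableEq n]

theorem natDegree_det_quadraticPencil_le :
    (quadraticPencil A B E).det.natDegree ≤ Fintype.card n * 2 :=
  natDegree_det_le_of_natDegree_le _ (natDegree_quadraticPencil_apply_le A B E)

theorem coeff_det_quadraticPencil_card_mul_two :
    (quadraticPencil A B E).det.coeff (Fintype.card n * 2) = E.det := by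
  rw [coeff_det_of_natDegree_le _ (natDegree_quadraticPencil_apply_le A B E)]
  congr 1
  ext i j
  simp [quadraticPencil]

theorem eval_det_quadraticPencil (z : R) :
    (quadraticPencil A B E).det.eval z = (A + z • B + z ^ 2 • E).det := by
  rw [← coe_evalRingHom, RingHom.map_det]
  congr 1
  ext i j
  simp only [quadraticPencil, RingHom.mapMatrix_apply, coe_evalRingHom, map_apply,
    Matrix.add_apply, Matrix.smul_apply, smul_eq_mul, eval_add, eval_mul, eval_C, eval_X, eval_pow]

theorem comp_C_mul_X_det_quadraticPencil (r : R) :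
    (quadraticPencil A B E).det.comp (C r * X) =
      (quadraticPencil A (r • B) (r ^ 2 • E)).det := by
  rw [← coe_compRingHom_apply, RingHom.map_det]
  congr 1
  ext i j : 1
  simp only [quadraticPencil, RingHom.mapMatrix_apply, coe_compRingHom, map_apply,
    Matrix.add_apply, Matrix.smul_apply, smul_eq_mul, add_comp, mul_comp, pow_comp, C_comp, X_comp,
    map_mul, map_pow]
  ring

theorem det_quadraticPencil_smul {D : Matrix n n R} (hD : IsUnit D.det) {ω : R}
    (hA : D * A = A * D) (hB : D * B = ω • (B * D)) (hE : D * E = ω ^ 2 • (E * D)) :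
    (quadraticPencil A (ω • B) (ω ^ 2 • E)).det = (quadraticPencil A B E).det := by
  have hconj : D.map C * quadraticPencil A B E =
      quadraticPencil A (ω • B) (ω ^ 2 • E) * D.map C := by
    simp only [quadraticPencil, Matrix.mul_add, Matrix.add_mul, Matrix.mul_smul, Matrix.smul_mul,
      ← Matrix.map_mul, hA, hB, hE]
  have hDC : IsUnit (D.map C).det := by
    simpa only [RingHom.map_det, RingHom.mapMatrix_apply] using hD.map C
  have hdet : (D.map C).det * (quadraticPencil A B E).det =
      (D.map C).det * (quadraticPencil A (ω • B) (ω ^ 2 • E)).det := by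
    rw [← det_mul, hconj, det_mul, mul_comm]
  exact (hDC.mul_left_cancel hdet).symm

end QuadraticPencil

section CyclicShift

variable {R : Type*} [CommRing R] {ℓ : ℕ}

def cyclicShift (p : Fin ℓ) (γ : Fin ℓ → R) : Matrix (Fin ℓ) (Fin ℓ) R :=
  of fun i s => if i = s + p then γ s else 0

theorem mul_cyclicShift_apply (M : Matrix (Fin ℓ) (Fin ℓ) R) (p : Fin ℓ) (γ : Fin ℓ → R)
    (i s : Fin ℓ) : (M * cyclicShift p γ) i s = M i (s + p) * γ s := by
  simp [cyclicShift, mul_apply]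

theorem pow_val_add_of_pow_eq_one {ω : R} (hω : ω ^ ℓ = 1) (s p : Fin ℓ) :
    ω ^ ((s + p : Fin ℓ) : ℕ) = ω ^ (s : ℕ) * ω ^ (p : ℕ) := by
  rw [Fin.val_add, ← pow_eq_pow_mod _ hω, pow_add]

theorem diagonal_pow_mul_cyclicShift {ω : R} (hω : ω ^ ℓ = 1) (p : Fin ℓ) (γ : Fin ℓ → R) :
    diagonal (fun i : Fin ℓ => ω ^ (i : ℕ)) * cyclicShift p γ
      = ω ^ (p : ℕ) • (cyclicShift p γ * diagonal fun i : Fin ℓ => ω ^ (i : ℕ)) := by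
  ext i s
  by_cases h : i = s + p
  · simp only [cyclicShift, h, diagonal_mul, mul_diagonal, pow_val_add_of_pow_eq_one hω, of_apply,
      if_true, Matrix.smul_apply, smul_eq_mul]
    ring
  · simp [cyclicShift, h]

variable [NeZero ℓ]

theorem cyclicShift_eq_permMatrix_mul_diagonal (p : Fin ℓ) (γ : Fin ℓ → R) :
    cyclicShift p γ = Equiv.Perm.permMatrix R (Equiv.subRight p) * diagonal γ := by
  ext i s
  simp [cyclicShift, PEquiv.toMatrix_apply, eq_sub_iff_add_eq, eq_comm]

theorem det_cyclicShift (p : Fin ℓ) (γ : Fin ℓ → R) :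
    (cyclicShift p γ).det = Equiv.Perm.sign (Equiv.subRight p) * ∏ s, γ s := by
  rw [cyclicShift_eq_permMatrix_mul_diagonal, det_mul, det_permutation, det_diagonal]

theorem det_cyclicShift_zero (γ : Fin ℓ → R) : (cyclicShift 0 γ).det = ∏ s, γ s := by
  have : Equiv.subRight (0 : Fin ℓ) = 1 := by ext; simp
  simp [det_cyclicShift, this]

theorem det_cyclicShift_two (γ : Fin ℓ → R) : (cyclicShift 2 γ).det = ∏ s, γ s := by
  have h2 : (2 : Fin ℓ) = 1 + 1 := by ext; simp [Fin.val_add]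
  have : Equiv.subRight (2 : Fin ℓ) = Equiv.subRight 1 * Equiv.subRight 1 := by
    ext x; simp [h2, sub_sub]
  rw [det_cyclicShift, this, map_mul, Int.units_mul_self, Units.val_one, Int.cast_one, one_mul]

theorem comp_C_mul_X_det_quadraticPencil_cyclicShift {ω : R} (hω : ω ^ ℓ = 1)
    (γ0 γ1 γ2 : Fin ℓ → R) :
    (quadraticPencil (cyclicShift 0 γ0) (cyclicShift 1 γ1) (cyclicShift 2 γ2)).det.comp
        (C ω * X) =
      (quadraticPencil (cyclicShift 0 γ0) (cyclicShift 1 γ1) (cyclicShift 2 γ2)).det := by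
  have hω1 : ω ^ ((1 : Fin ℓ) : ℕ) = ω := by
    rw [Fin.val_one', ← pow_eq_pow_mod _ hω, pow_one]
  have hω2 : ω ^ ((2 : Fin ℓ) : ℕ) = ω ^ 2 := by
    rw [Fin.coe_ofNat_eq_mod, ← pow_eq_pow_mod _ hω]
  have hunit : IsUnit ω := IsUnit.of_pow_eq_one hω (NeZero.ne ℓ)
  rw [comp_C_mul_X_det_quadraticPencil]
  refine det_quadraticPencil_smul _ _ _ (D := diagonal fun i : Fin ℓ => ω ^ (i : ℕ)) ?_ ?_ ?_ ?_
  · rw [det_diagonal]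
    exact IsUnit.prod_univ_iff.mpr fun i => hunit.pow _
  · simpa using diagonal_pow_mul_cyclicShift hω 0 γ0
  · simpa only [hω1] using diagonal_pow_mul_cyclicShift hω 1 γ1
  · simpa only [hω2] using diagonal_pow_mul_cyclicShift hω 2 γ2

end CyclicShift

section RotationInvariantPolynomial

variable {R : Type*} [CommRing R] [IsDomain R] {ω : R} {ℓ : ℕ} {P : R[X]}

theorem Polynomial.coeff_eq_zero_of_comp_C_mul_X_eq (hω : IsPrimitiveRoot ω ℓ)
    (hP : P.comp (C ω * X) = P) {n : ℕ} (hn : ¬ℓ ∣ n) : P.coeff n = 0 := by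
  have h : P.coeff n * ω ^ n = P.coeff n := by
    simpa using congrArg (coeff · n) hP
  have h' : P.coeff n * (ω ^ n - 1) = 0 := by linear_combination h
  refine (mul_eq_zero.mp h').resolve_right fun h1 => hn ?_
  exact (hω.pow_eq_one_iff_dvd n).mp (sub_eq_zero.mp h1)

theorem Polynomial.eq_of_comp_C_mul_X_eq_of_natDegree_le [NeZero ℓ]
    (hω : IsPrimitiveRoot ω ℓ) (hP : P.comp (C ω * X) = P) (hdeg : P.natDegree ≤ 2 * ℓ) :
    P = C (P.coeff 0) + C (P.coeff ℓ) * X ^ ℓ + C (P.coeff (2 * ℓ)) * X ^ (2 * ℓ) := by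
  have hℓ : 0 < ℓ := Nat.pos_of_neZero ℓ
  ext n
  simp only [coeff_add, coeff_C, coeff_C_mul_X_pow]
  by_cases h0 : n = 0; · subst h0; simp [hℓ.ne', hℓ.ne]
  by_cases h1 : n = ℓ; · subst h1; simp [hℓ.ne']
  by_cases h2 : n = 2 * ℓ; · subst h2; simp [h0, h1]
  simp only [h0, h1, h2, if_false, add_zero]
  by_cases hlt : 2 * ℓ < n
  · exact coeff_eq_zero_of_natDegree_lt (hdeg.trans_lt hlt)
  refine coeff_eq_zero_of_comp_C_mul_X_eq hω hP fun ⟨k, hk⟩ => ?_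
  have : k ≤ 2 := by nlinarith
  interval_cases k <;> omega

end RotationInvariantPolynomial

theorem exists_det_cyclicShift_pencil_eq {R : Type*} [CommRing R] [IsDomain R] {ℓ : ℕ}
    [NeZero ℓ] {ω : R} (hω : IsPrimitiveRoot ω ℓ) (γ0 γ1 γ2 : Fin ℓ → R) :
    ∃ v : R, ∀ z : R,
      (cyclicShift 0 γ0 + z • cyclicShift 1 γ1 + z ^ 2 • cyclicShift 2 γ2).det
        = (∏ s, γ0 s) + v * z ^ ℓ + (∏ s, γ2 s) * z ^ (2 * ℓ) := by
  set P := (quadraticPencil (cyclicShift 0 γ0) (cyclicShift 1 γ1) (cyclicShift 2 γ2)).det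
  have hdeg : P.natDegree ≤ 2 * ℓ := by
    simpa [mul_comm] using natDegree_det_quadraticPencil_le
      (cyclicShift 0 γ0) (cyclicShift 1 γ1) (cyclicShift 2 γ2)
  have hP := eq_of_comp_C_mul_X_eq_of_natDegree_le hω
    (comp_C_mul_X_det_quadraticPencil_cyclicShift hω.pow_eq_one γ0 γ1 γ2) hdeg
  have hc0 : P.coeff 0 = ∏ s, γ0 s := by
    rw [coeff_zero_eq_eval_zero, eval_det_quadraticPencil]
    simp [det_cyclicShift_zero]
  have hc2 : P.coeff (2 * ℓ) = ∏ s, γ2 s := by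
    simpa [mul_comm, det_cyclicShift_two] using coeff_det_quadraticPencil_card_mul_two
      (cyclicShift 0 γ0) (cyclicShift 1 γ1) (cyclicShift 2 γ2)
  refine ⟨P.coeff ℓ, fun z => ?_⟩
  conv_lhs => rw [← eval_det_quadraticPencil, hP]
  simp only [eval_add, eval_mul, eval_C, eval_pow, eval_X]
  rw [hc0, hc2]

theorem det_cyclic_column_perturbation_general
    (ℓ : ℕ) [NeZero ℓ]
    (C : Matrix (Fin ℓ) (Fin ℓ) ℂ)
    (γ0 γ1 γ2 : Fin ℓ → ℂ) :
    ∃ v1 : ℂ, ∀ z : ℂ,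
      (Matrix.of fun i s : Fin ℓ =>
          γ0 s * C i s + γ1 s * z * C i (s + 1) + γ2 s * z ^ 2 * C i (s + 2)).det
        = C.det * ((∏ s : Fin ℓ, γ0 s) + v1 * z ^ ℓ
            + (∏ s : Fin ℓ, γ2 s) * z ^ (2 * ℓ)) := by
  obtain ⟨v1, hv1⟩ :=
    exists_det_cyclicShift_pencil_eq (Complex.isPrimitiveRoot_exp ℓ (NeZero.ne ℓ)) γ0 γ1 γ2
  refine ⟨v1, fun z => ?_⟩
  rw [← hv1, ← det_mul]
  congr 1
  ext i s
  simp only [of_apply, mul_add, Algebra.mul_smul_comm, Matrix.add_apply, mul_cyclicShift_apply,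
    add_zero, Matrix.smul_apply, smul_eq_mul]
  ring

/-- determinant of the matrix `N(z)` whose `s`-th column is
`γ_s^0·C_s + γ_s^1·z·C_{s+1} + γ_s^2·z²·C_{s+2}` (column indices cyclic mod `ℓ`):
`det N(z) = det C·(∏ γ_s^0 + v₁·z^ℓ + (∏ γ_s^2)·z^{2ℓ})` for some constant `v₁`. -/
theorem det_cyclic_column_perturbation
    (ℓ : ℕ) (hℓ : 1 ≤ ℓ) [NeZero ℓ]
    (C : Matrix (Fin ℓ) (Fin ℓ) ℂ)
    (γ0 γ1 γ2 : Fin ℓ → ℂ) :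
    ∃ v1 : ℂ, ∀ z : ℂ,
      (Matrix.of fun i s : Fin ℓ =>
          γ0 s * C i s + γ1 s * z * C i (s + 1) + γ2 s * z ^ 2 * C i (s + 2)).det
        = C.det * ((∏ s : Fin ℓ, γ0 s) + v1 * z ^ ℓ
            + (∏ s : Fin ℓ, γ2 s) * z ^ (2 * ℓ)) :=
  det_cyclic_column_perturbation_general ℓ C γ0 γ1 γ2
end

section
/- Let ℓ ≥ 3, let C be an ℓ×ℓ complex matrix with columns C₁, …, C_ℓ, and for each s ∈ {1,…,ℓ} and p ∈ {0,1,2} let γ_s^p ∈ ℂ. For z ∈ ℂ let N(z) be the ℓ×ℓ matrix whose s-th column is γ_s^0·C_s + γ_s^1·z·C_{s+1} + γ_s^2·z²·C_{s+2}, column indices taken modulo ℓ. Fix s, t ∈ ℤ/ℓ and define κ(s,t) = ℓ−1 if s = t, 0 if s = t−1, 1 if s = t−2, and otherwise the number of elements of the cyclic interval [s+1, t−1] in ℤ/ℓ; define μ(s,t) = 1 if s = t, 0 if s = t−1, ℓ−1 if s = t−2, and otherwise the number of elements of the cyclic interval [t−1, s−1] in ℤ/ℓ. Then there exist α, β ∈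 ℂ, independent of z, such that for all z ∈ ℂ the determinant of the matrix obtained from N(z) by replacing its s-th column with C_t equals det C · ( α·z^{(ℓ−1)−κ(s,t)} + β·z^{(ℓ−1)+μ(s,t)} ). Consequently, if det C ≠ 0, then writing v for the quadratic polynomial with det N(z) = det C·v(z^ℓ), for every z with v(z^ℓ) ≠ 0 the linear system N(z)·E = C_t has a unique solution E ∈ ℂ^ℓ, and its s-th entry equals ( α·z^{(ℓ−1)−κ(s,t)} + β·z^{(ℓ−1)+μ(s,t)} ) / v(z^ℓ). -/
/-!
Write `N(z) = C * B(z)`, where `B(z)` is the cyclic band matrix of the coefficients `γ`. Replacing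
the `s`-th column of `N(z)` by `C_t` gives `C * B'(z)`, where `B'(z)` is `B(z)` with its `s`-th
column replaced by the unit vector `e_t`. The `(i, j)` entry of `B(z)` is a constant times
`z ^ ((i - j) mod ℓ)`, so the Leibniz term of `det B'(z)` for a permutation `σ` with `σ s = t` is a
constant times `z ^ D` with `D = ∑_{j ≠ s} ((σ j - j) mod ℓ)`. As `σ` is a bijection,
`D ≡ s - t (mod ℓ)`, and the band width `2` gives `D ≤ 2 (ℓ - 1)`; hence `D` is `(s - t) mod ℓ`
or that plus `ℓ`, which are the exponents `(ℓ - 1) - κ` and `(ℓ - 1) + μ`. The formula for `E s`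
is Cramer's rule.
-/

open Matrix Finset Equiv

section FinArith
variable {ℓ : ℕ} [NeZero ℓ]

lemma Fin.val_one_of_two_le (h : 2 ≤ ℓ) : ((1 : Fin ℓ) : ℕ) = 1 := by
  rw [Fin.coe_ofNat_eq_mod, Nat.mod_eq_of_lt h]

lemma Fin.val_two_of_three_le (h : 3 ≤ ℓ) : ((2 : Fin ℓ) : ℕ) = 2 := by
  rw [Fin.coe_ofNat_eq_mod, Nat.mod_eq_of_lt h]

lemma Fin.eq_neg_iff_val_eq {d k : Fin ℓ} (hk : k ≠ 0) : d = -k ↔ (d : ℕ) = ℓ - k := by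
  have hk' : 0 < (k : ℕ) := Fin.pos_iff_ne_zero.mpr hk
  rw [Fin.ext_iff, Fin.val_neg', Nat.mod_eq_of_lt (by omega)]

lemma Fin.val_add_three_le {d : Fin ℓ} (hℓ : 3 ≤ ℓ) (h0 : d ≠ 0) (h1 : d ≠ -1) (h2 : d ≠ -2) :
    (d : ℕ) + 3 ≤ ℓ := by
  have h1v := Fin.val_one_of_two_le (ℓ := ℓ) (by omega)
  have h2v := Fin.val_two_of_three_le hℓ
  rw [Ne, Fin.eq_neg_iff_val_eq (by rw [Ne, Fin.ext_iff, h1v, Fin.val_zero]; omega), h1v] at h1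
  rw [Ne, Fin.eq_neg_iff_val_eq (by rw [Ne, Fin.ext_iff, h2v, Fin.val_zero]; omega), h2v] at h2
  have := Fin.pos_iff_ne_zero.mpr h0
  omega

lemma Fin.val_neg_sub_two {d : Fin ℓ} (h : (d : ℕ) + 3 ≤ ℓ) :
    ((-d - 2 : Fin ℓ) : ℕ) = ℓ - d - 2 := by
  have h2 := Fin.val_two_of_three_le (ℓ := ℓ) (by omega)
  have hadd : ((d + 2 : Fin ℓ) : ℕ) = d + 2 := by rw [Fin.val_add_eq_ite, h2, if_neg (by omega)]
  rw [show -d - 2 = -(d + 2) by abel, Fin.val_neg', hadd, Nat.mod_eq_of_lt (by omega)]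
  omega

end FinArith

lemma eq_sub_iff_sub_eq_neg {G : Type*} [AddCommGroup G] {a b c : G} :
    a = b - c ↔ a - b = -c := by
  rw [sub_eq_iff_eq_add', sub_eq_add_neg]

lemma Nat.eq_or_eq_add_of_mod_eq {D m ℓ : ℕ} (hmod : D % ℓ = m) (hD : D ≤ 2 * (ℓ - 1)) :
    D = m ∨ (D = m + ℓ ∧ m + 2 ≤ ℓ) := by
  have hdm := Nat.div_add_mod D ℓ
  rw [hmod] at hdm
  obtain h | h | h : D / ℓ = 0 ∨ D / ℓ = 1 ∨ 2 ≤ D / ℓ := by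
    generalize D / ℓ = q; omega
  · rw [h] at hdm; omega
  · rw [h] at hdm; omega
  · have := Nat.mul_le_mul_left ℓ h
    have : ℓ ≠ 0 := by rintro rfl; simp at h
    omega

section Exponents
variable {ℓ : ℕ} [NeZero ℓ]

lemma sub_one_sub_kappa (hℓ : 3 ≤ ℓ) (s t : Fin ℓ) :
    ℓ - 1 - (if s = t then ℓ - 1 else if s = t - 1 then 0 else if s = t - 2 then 1
      else (t - s - 2 : Fin ℓ).val + 1) = (s - t : Fin ℓ).val := by
  have h1v := Fin.val_one_of_two_le (ℓ := ℓ) (by omega)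
  have h2v := Fin.val_two_of_three_le hℓ
  rw [show t - s - 2 = -(s - t) - 2 by abel]
  simp only [eq_sub_iff_sub_eq_neg, ← sub_eq_zero (a := s) (b := t)]
  generalize s - t = d
  split_ifs with h0 h1 h2
  · simp [h0]
  · rw [h1, Fin.val_neg', h1v, Nat.mod_eq_of_lt (by omega)]; omega
  · rw [h2, Fin.val_neg', h2v, Nat.mod_eq_of_lt (by omega)]; omega
  · have := Fin.val_add_three_le hℓ h0 h1 h2
    rw [Fin.val_neg_sub_two this]; omega

lemma sub_one_add_mu (hℓ : 3 ≤ ℓ) (s t : Fin ℓ) (h : (s - t : Fin ℓ).val + 2 ≤ ℓ) :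
    ℓ - 1 + (if s = t then 1 else if s = t - 1 then 0 else if s = t - 2 then ℓ - 1
      else (s - t : Fin ℓ).val + 1) = (s - t : Fin ℓ).val + ℓ := by
  have h1v := Fin.val_one_of_two_le (ℓ := ℓ) (by omega)
  have h2v := Fin.val_two_of_three_le hℓ
  simp only [eq_sub_iff_sub_eq_neg, ← sub_eq_zero (a := s) (b := t)]
  generalize s - t = d at h ⊢
  split_ifs with h0 h1 h2
  · simp [h0]; omega
  · rw [h1, Fin.val_neg', h1v, Nat.mod_eq_of_lt (by omega)] at h; omega
  · rw [h2, Fin.val_neg', h2v, Nat.mod_eq_of_lt (by omega)]; omega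
  · omega

end Exponents

theorem exists_sum_mul_pow_eq_of_mem_pair {ι R : Type*} [Fintype ι] [CommSemiring R]
    (c : ι → R) (D : ι → ℕ) (p q : ℕ) (h : ∀ i, c i ≠ 0 → D i = p ∨ D i = q) :
    ∃ α β : R, ∀ z : R, ∑ i, c i * z ^ D i = α * z ^ p + β * z ^ q := by
  classical
  refine ⟨∑ i, if D i = p then c i else 0, ∑ i, if D i = p then 0 else c i, fun z => ?_⟩
  rw [sum_mul, sum_mul, ← sum_add_distrib]
  refine sum_congr rfl fun i _ => ?_
  by_cases hc : c i = 0
  · simp [hc]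
  by_cases hp : D i = p
  · simp [hp]
  · obtain hq : D i = q := (h i hc).resolve_left hp
    rw [hq] at hp ⊢
    simp [hp]

theorem det_updateCol_single_of_mul_pow {n R : Type*} [Fintype n] [DecidableEq n] [CommRing R]
    (a : Matrix n n R) (e : n → n → ℕ) (z : R) (s t : n) :
    ((of fun i j => a i j * z ^ e i j).updateCol s (Pi.single t 1)).det =
      ∑ σ : Perm n, (if σ s = t then (Perm.sign σ : R) * ∏ j ∈ univ.erase s, a (σ j) j else 0) *
        z ^ ∑ j ∈ univ.erase s, e (σ j) j := by
  rw [det_apply']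
  refine sum_congr rfl fun σ _ => ?_
  rw [← mul_prod_erase univ _ (mem_univ s), updateCol_self,
    prod_congr rfl fun j hj => updateCol_ne (ne_of_mem_erase hj)]
  simp only [of_apply, prod_mul_distrib, prod_pow_eq_pow_sum, Pi.single_apply]
  split_ifs <;> ring

section Band
variable {ℓ : ℕ} {R : Type*}

theorem sum_val_sub_erase_mod [NeZero ℓ] (σ : Perm (Fin ℓ)) (s : Fin ℓ) :
    (∑ j ∈ univ.erase s, ((σ j - j : Fin ℓ) : ℕ)) % ℓ = ((s - σ s : Fin ℓ) : ℕ) := by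
  open Fin.NatCast Fin.CommRing in
  rw [← Fin.val_natCast, Nat.cast_sum]
  simp only [Fin.cast_val_eq_self]
  rw [sum_sub_distrib, sum_erase_eq_sub (mem_univ s), sum_erase_eq_sub (mem_univ s),
    Equiv.sum_comp σ fun j => j]
  congr 1
  abel

theorem sum_val_sub_erase_le [CommMonoidWithZero R] {a : Matrix (Fin ℓ) (Fin ℓ) R}
    (hband : ∀ i j, a i j ≠ 0 → ((i - j : Fin ℓ) : ℕ) ≤ 2) {σ : Perm (Fin ℓ)} {s : Fin ℓ}
    (h : ∏ j ∈ univ.erase s, a (σ j) j ≠ 0) :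
    ∑ j ∈ univ.erase s, ((σ j - j : Fin ℓ) : ℕ) ≤ 2 * (ℓ - 1) := by
  calc ∑ j ∈ univ.erase s, ((σ j - j : Fin ℓ) : ℕ) ≤ (univ.erase s).card • 2 :=
        sum_le_card_nsmul _ _ _ fun j hj => hband _ _ fun h0 => h (prod_eq_zero hj h0)
    _ = 2 * (ℓ - 1) := by simp [card_erase_of_mem, mul_comm]

theorem exists_det_updateCol_single_eq_of_band [NeZero ℓ] [CommRing R]
    {a : Matrix (Fin ℓ) (Fin ℓ) R} (hband : ∀ i j, a i j ≠ 0 → ((i - j : Fin ℓ) : ℕ) ≤ 2)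
    (s t : Fin ℓ) (q : ℕ) (hq : ((s - t : Fin ℓ) : ℕ) + 2 ≤ ℓ → q = (s - t : Fin ℓ) + ℓ) :
    ∃ α β : R, ∀ z : R,
      ((of fun i j => a i j * z ^ ((i - j : Fin ℓ) : ℕ)).updateCol s (Pi.single t 1)).det =
        α * z ^ ((s - t : Fin ℓ) : ℕ) + β * z ^ q := by
  simp only [det_updateCol_single_of_mul_pow]
  refine exists_sum_mul_pow_eq_of_mem_pair _ _ _ _ fun σ hσ => ?_
  split_ifs at hσ with hσs
  · have hmod := sum_val_sub_erase_mod σ s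
    rw [hσs] at hmod
    rcases Nat.eq_or_eq_add_of_mod_eq hmod (sum_val_sub_erase_le hband (right_ne_zero_of_mul hσ))
      with hD | ⟨hD, hm⟩
    · exact Or.inl hD
    · exact Or.inr (hD.trans (hq hm).symm)
  · exact absurd rfl hσ

end Band

section CyclicBand
variable {ℓ : ℕ} [NeZero ℓ] {R : Type*}

def cyclicBand [Semiring R] (γ0 γ1 γ2 : Fin ℓ → R) (z : R) : Matrix (Fin ℓ) (Fin ℓ) R :=
  of fun i j => (if i = j then γ0 j else 0) + (if i = j + 1 then γ1 j * z else 0) +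
    (if i = j + 2 then γ2 j * z ^ 2 else 0)

variable [CommRing R] (γ0 γ1 γ2 : Fin ℓ → R)

theorem mul_cyclicBand_apply (C : Matrix (Fin ℓ) (Fin ℓ) R) (z : R) (i j : Fin ℓ) :
    (C * cyclicBand γ0 γ1 γ2 z) i j =
      γ0 j * C i j + γ1 j * z * C i (j + 1) + γ2 j * z ^ 2 * C i (j + 2) := by
  simp only [cyclicBand, mul_apply, of_apply, mul_add, sum_add_distrib, mul_ite, mul_zero,
    sum_ite_eq', mem_univ, if_true]
  ring

theorem cyclicBand_apply_sub (z : R) (i j : Fin ℓ) :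
    cyclicBand γ0 γ1 γ2 z i j = (if i - j = 0 then γ0 j else 0) +
      (if i - j = 1 then γ1 j * z else 0) + (if i - j = 2 then γ2 j * z ^ 2 else 0) := by
  simp only [cyclicBand, of_apply, sub_eq_iff_eq_add', add_zero]

theorem val_sub_le_two_of_cyclicBand_ne_zero {z : R} {i j : Fin ℓ}
    (h : cyclicBand γ0 γ1 γ2 z i j ≠ 0) : ((i - j : Fin ℓ) : ℕ) ≤ 2 := by
  rw [cyclicBand_apply_sub] at h
  generalize i - j = d at h ⊢
  by_contra hd
  have h0 : d ≠ 0 := by rintro rfl; simp at hd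
  have h1 : d ≠ 1 := by
    rintro rfl; rw [Fin.coe_ofNat_eq_mod] at hd; exact hd ((Nat.mod_le _ _).trans (by norm_num))
  have h2 : d ≠ 2 := by
    rintro rfl; rw [Fin.coe_ofNat_eq_mod] at hd; exact hd (Nat.mod_le _ _)
  simp [h0, h1, h2] at h

theorem cyclicBand_eq_mul_pow (hℓ : 3 ≤ ℓ) (z : R) :
    cyclicBand γ0 γ1 γ2 z =
      of fun i j => cyclicBand γ0 γ1 γ2 1 i j * z ^ ((i - j : Fin ℓ) : ℕ) := by
  have h1v := Fin.val_one_of_two_le (ℓ := ℓ) (by omega)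
  have h2v := Fin.val_two_of_three_le hℓ
  have h01 : (0 : Fin ℓ) ≠ 1 := by rw [Ne, Fin.ext_iff, h1v, Fin.val_zero]; omega
  have h02 : (0 : Fin ℓ) ≠ 2 := by rw [Ne, Fin.ext_iff, h2v, Fin.val_zero]; omega
  have h12 : (1 : Fin ℓ) ≠ 2 := by rw [Ne, Fin.ext_iff, h1v, h2v]; omega
  ext i j
  simp only [cyclicBand_apply_sub, of_apply]
  generalize i - j = d
  by_cases h0 : d = 0
  · simp [h0, h01, h02]
  by_cases h1 : d = 1
  · simp [h1, h01.symm, h12, Nat.mod_eq_of_lt (show 1 < ℓ by omega)]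
  by_cases h2 : d = 2
  · simp [h2, h02.symm, h12.symm, Nat.mod_eq_of_lt (show 2 < ℓ by omega)]
  · simp [h0, h1, h2]

end CyclicBand

theorem Matrix.eq_det_updateCol_div_det {n K : Type*} [Fintype n] [DecidableEq n] [Field K]
    {M : Matrix n n K} {E b : n → K} (hM : M.det ≠ 0) (hE : M *ᵥ E = b) (j : n) :
    E j = (M.updateCol j b).det / M.det := by
  rw [eq_div_iff hM, ← cramer_apply, ← hE, cramer_eq_adjugate_mulVec, mulVec_mulVec,
    adjugate_mul, smul_mulVec, one_mulVec, Pi.smul_apply, smul_eq_mul, mul_comm]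

/-- Cramer-type solution of the cyclic linear system. Replacing the
`s`-th column of `N(z)` by `C_t` yields a determinant of the form
`det C·(α·z^{(ℓ−1)−κ} + β·z^{(ℓ−1)+μ})`; consequently, when `det C ≠ 0` and
`det N(z) ≠ 0`, the system `N(z)·E = C_t` has a unique solution, whose `s`-th
entry is `det C·(α·z^{(ℓ−1)−κ} + β·z^{(ℓ−1)+μ}) / det N(z)`
(`= (α·z^{(ℓ−1)−κ} + β·z^{(ℓ−1)+μ}) / v(z^ℓ)`). -/
theorem cyclic_system_cramer_solution
    (ℓ : ℕ) (hℓ : 3 ≤ ℓ) [NeZero ℓ]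
    (C : Matrix (Fin ℓ) (Fin ℓ) ℂ)
    (γ0 γ1 γ2 : Fin ℓ → ℂ)
    (N : ℂ → Matrix (Fin ℓ) (Fin ℓ) ℂ)
    (hN : ∀ z, N z = Matrix.of fun i c : Fin ℓ =>
      γ0 c * C i c + γ1 c * z * C i (c + 1) + γ2 c * z ^ 2 * C i (c + 2))
    (s t : Fin ℓ)
    (κ μ : ℕ)
    (hκ : κ = if s = t then ℓ - 1 else if s = t - 1 then 0 else if s = t - 2 then 1
          else (t - s - 2 : Fin ℓ).val + 1)
    (hμ : μ = if s = t then 1 else if s = t - 1 then 0 else if s = t - 2 then ℓ - 1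
          else (s - t : Fin ℓ).val + 1) :
    ∃ α β : ℂ,
      (∀ z : ℂ,
        ((N z).updateCol s (fun i => C i t)).det
          = C.det * (α * z ^ ((ℓ - 1) - κ) + β * z ^ ((ℓ - 1) + μ))) ∧
      (C.det ≠ 0 → ∀ z : ℂ, (N z).det ≠ 0 →
        (∃! E : Fin ℓ → ℂ, (N z).mulVec E = fun i => C i t) ∧
        (∀ E : Fin ℓ → ℂ, (N z).mulVec E = (fun i => C i t) →
          E s = C.det * (α * z ^ ((ℓ - 1) - κ) + β * z ^ ((ℓ - 1) + μ)) / (N z).det)) := by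
  obtain ⟨α, β, hdetB⟩ := exists_det_updateCol_single_eq_of_band
    (fun i j => val_sub_le_two_of_cyclicBand_ne_zero γ0 γ1 γ2 (z := 1)) s t (ℓ - 1 + μ)
    fun h => hμ ▸ sub_one_add_mu hℓ s t h
  have hfactor : ∀ z, (N z).updateCol s (fun i => C i t) =
      C * (cyclicBand γ0 γ1 γ2 z).updateCol s (Pi.single t 1) := fun z => by
    rw [mul_updateCol, mulVec_single_one, hN]
    congr 1
    ext i j
    rw [of_apply, mul_cyclicBand_apply]
  have hdet : ∀ z, ((N z).updateCol s fun i => C i t).det =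
      C.det * (α * z ^ (ℓ - 1 - κ) + β * z ^ (ℓ - 1 + μ)) := fun z => by
    rw [hfactor, det_mul, cyclicBand_eq_mul_pow γ0 γ1 γ2 hℓ, hdetB, hκ, sub_one_sub_kappa hℓ]
  refine ⟨α, β, hdet, fun _ z hNz => ⟨?_, fun E hE => ?_⟩⟩
  · have hunit : IsUnit (N z) := (isUnit_iff_isUnit_det _).mpr (isUnit_iff_ne_zero.mpr hNz)
    exact Function.Bijective.existsUnique
      ⟨mulVec_injective_iff_isUnit.mpr hunit, mulVec_surjective_iff_isUnit.mpr hunit⟩ _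
  · rw [eq_det_updateCol_div_det hNz hE, hdet]
end

section
/- Let ℓ ≥ 3 and let τ : ℤ/ℓ → ℤ be a function with τ(j) ∈ {0, 1, 2} for every j. Define υ : ℤ/ℓ → ℤ/ℓ by υ(j) = j + τ(j) (reducing modulo ℓ). Then υ is a bijection of ℤ/ℓ if and only if τ is non-decreasing, i.e., if and only if there is no j ∈ ℤ/ℓ with τ(j+1) = τ(j) − 1 or τ(j+2) = τ(j) − 2 (equalities of integers). -/
/-- for `τ : ℤ/ℓ → {0,1,2} ⊆ ℤ`, the map `υ(j) = j + τ(j)` on `ℤ/ℓ`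
is a bijection iff `τ` is non-decreasing, i.e. iff there is no `j` with
`τ(j+1) = τ(j) − 1` or `τ(j+2) = τ(j) − 2` (as integers). -/
theorem shift_bijective_iff_nondecreasing
    (ℓ : ℕ) (hℓ : 3 ≤ ℓ) [NeZero ℓ]
    (τ : ZMod ℓ → ℤ)
    (hτ : ∀ j, τ j = 0 ∨ τ j = 1 ∨ τ j = 2) :
    Function.Bijective (fun j : ZMod ℓ => j + (τ j : ZMod ℓ)) ↔
      ¬ ∃ j : ZMod ℓ, τ (j + 1) = τ j - 1 ∨ τ (j + 2) = τ j - 2 := by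
  haveI : Fact (1 < ℓ) := ⟨by omega⟩
  have h1 : (1 : ZMod ℓ) ≠ 0 := one_ne_zero
  have h2 : (2 : ZMod ℓ) ≠ 0 := by
    intro h
    have h' : ((2 : ℕ) : ZMod ℓ) = 0 := by exact_mod_cast h
    have := (ZMod.natCast_eq_zero_iff 2 ℓ).mp h'
    have := Nat.le_of_dvd (by norm_num) this
    omega
  constructor
  · rintro ⟨hinj, -⟩ ⟨j, hj | hj⟩
    · have heq : (fun k : ZMod ℓ => k + (τ k : ZMod ℓ)) (j + 1)
          = (fun k : ZMod ℓ => k + (τ k : ZMod ℓ)) j := by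
        simp only
        rw [hj]; push_cast; ring
      have := hinj heq
      exact h1 (add_eq_left.mp this)
    · have heq : (fun k : ZMod ℓ => k + (τ k : ZMod ℓ)) (j + 2)
          = (fun k : ZMod ℓ => k + (τ k : ZMod ℓ)) j := by
        simp only
        rw [hj]; push_cast; ring
      have := hinj heq
      exact h2 (add_eq_left.mp this)
  · intro h
    refine Finite.injective_iff_bijective.mp ?_
    intro a b hab
    simp only at hab
    rcases hτ a with ha | ha | ha <;> rcases hτ b with hb | hb | hb <;>
      rw [ha, hb] at hab <;> push_cast at hab
    · linear_combination hab
    · -- τ a = 0, τ b = 1 : a = b + 1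
      have hba : a = b + 1 := by linear_combination hab
      exact absurd ⟨b, Or.inl (by rw [← hba, ha, hb]; ring)⟩ h
    · -- τ a = 0, τ b = 2 : a = b + 2
      have hba : a = b + 2 := by linear_combination hab
      exact absurd ⟨b, Or.inr (by rw [← hba, ha, hb]; ring)⟩ h
    · -- τ a = 1, τ b = 0 : b = a + 1
      have hba : b = a + 1 := by linear_combination -hab
      exact absurd ⟨a, Or.inl (by rw [← hba, ha, hb]; ring)⟩ h
    · linear_combination hab
    · -- τ a = 1, τ b = 2 : a = b + 1
      have hba : a = b + 1 := by linear_combination hab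
      exact absurd ⟨b, Or.inl (by rw [← hba, ha, hb]; ring)⟩ h
    · -- τ a = 2, τ b = 0 : b = a + 2
      have hba : b = a + 2 := by linear_combination -hab
      exact absurd ⟨a, Or.inr (by rw [← hba, ha, hb]; ring)⟩ h
    · -- τ a = 2, τ b = 1 : b = a + 1
      have hba : b = a + 1 := by linear_combination -hab
      exact absurd ⟨a, Or.inl (by rw [← hba, ha, hb]; ring)⟩ h
    · linear_combination hab
end

section
/- Let ℓ ≥ 1 and let τ : ℤ/ℓ → ℤ be a function with τ(j) ∈ {0, 1, 2} for every j, and suppose τ is non-decreasing, i.e., there is no j ∈ ℤ/ℓ with τ(j+1) = τ(j) − 1 or τ(j+2) = τ(j) − 2 (equalities of integers). Then ∑_{j ∈ ℤ/ℓ} τ(j) ∈ {0, ℓ, 2ℓ}. -/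
/-- a non-decreasing configuration `τ : ℤ/ℓ → {0,1,2}` has total sum
`0`, `ℓ`, or `2ℓ`. -/
theorem nondecreasing_sum_eq
    (ℓ : ℕ) (hℓ : 1 ≤ ℓ) [NeZero ℓ]
    (τ : ZMod ℓ → ℤ)
    (hτ : ∀ j, τ j = 0 ∨ τ j = 1 ∨ τ j = 2)
    (hnd : ¬ ∃ j : ZMod ℓ, τ (j + 1) = τ j - 1 ∨ τ (j + 2) = τ j - 2) :
    (∑ j : ZMod ℓ, τ j) = 0 ∨ (∑ j : ZMod ℓ, τ j) = (ℓ : ℤ) ∨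
      (∑ j : ZMod ℓ, τ j) = 2 * (ℓ : ℤ) := by
  push_neg at hnd
  by_cases h0 : ∃ p : ZMod ℓ, τ p = 0 ∧ τ (p + 1) = 0
  · -- all zero
    left
    obtain ⟨p, hp⟩ := h0
    have key : ∀ n : ℕ, τ (p - n) = 0 ∧ τ (p - n + 1) = 0 := by
      intro n
      induction n with
      | zero => simpa using hp
      | succ n ih =>
        have h1 : p - ((n+1 : ℕ) : ZMod ℓ) + 1 = p - n := by push_cast; ring
        have h2 : p - ((n+1 : ℕ) : ZMod ℓ) + 2 = p - n + 1 := by push_cast; ring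
        have hq := hnd (p - ((n+1 : ℕ) : ZMod ℓ))
        rw [h1, h2] at hq
        have hzero : τ (p - ((n+1 : ℕ) : ZMod ℓ)) = 0 := by
          rcases hτ (p - ((n+1 : ℕ) : ZMod ℓ)) with h | h | h
          · exact h
          · exact absurd (by rw [ih.1, h]; ring) hq.1
          · exact absurd (by rw [ih.2, h]; ring) hq.2
        exact ⟨hzero, by rw [h1]; exact ih.1⟩
    have allzero : ∀ j : ZMod ℓ, τ j = 0 := by
      intro j
      have hcast : ((p - j).val : ZMod ℓ) = p - j := ZMod.natCast_rightInverse (p - j)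
      have := (key (p - j).val).1
      rwa [hcast, show p - (p - j) = j by ring] at this
    simp [allzero]
  · by_cases h2 : ∃ p : ZMod ℓ, τ p = 2 ∧ τ (p + 1) = 2
    · -- all two
      right; right
      obtain ⟨p, hp⟩ := h2
      have key : ∀ n : ℕ, τ (p + n) = 2 ∧ τ (p + n + 1) = 2 := by
        intro n
        induction n with
        | zero => simpa using hp
        | succ n ih =>
          have h1 : p + ((n+1 : ℕ) : ZMod ℓ) = p + n + 1 := by push_cast; ring
          have h2' : (p + n) + 2 = p + ((n+1 : ℕ) : ZMod ℓ) + 1 := by push_cast; ring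
          have hq := (hnd (p + n)).2
          rw [h2', ih.1] at hq
          have hq2 := (hnd (p + n + 1)).1
          rw [ih.2] at hq2
          have h2'' : (p + n + 1) + 1 = p + ((n+1 : ℕ) : ZMod ℓ) + 1 := by push_cast; ring
          rw [h2''] at hq2
          have htwo : τ (p + ((n+1 : ℕ) : ZMod ℓ) + 1) = 2 := by
            rcases hτ (p + ((n+1 : ℕ) : ZMod ℓ) + 1) with h | h | h
            · exact absurd (by rw [h]; ring) hq
            · exact absurd (by rw [h]; ring) hq2
            · exact h
          exact ⟨by rw [h1]; exact ih.2, htwo⟩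
      have alltwo : ∀ j : ZMod ℓ, τ j = 2 := by
        intro j
        have hcast : ((j - p).val : ZMod ℓ) = j - p := ZMod.natCast_rightInverse (j - p)
        have := (key (j - p).val).1
        rwa [hcast, show p + (j - p) = j by ring] at this
      rw [Finset.sum_congr rfl (fun j _ => alltwo j)]
      simp [ZMod.card]
      ring
    · -- mixed case: sum = ℓ
      right; left
      push_neg at h0 h2
      have key : ∀ j : ZMod ℓ, τ j - 1 =
          (if τ (j+1) = 0 then (1:ℤ) else 0) - (if τ j = 0 then (1:ℤ) else 0) := by
        intro j
        rcases hτ j with h | h | h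
        · simp [h, h0 j h]
        · have hne : τ (j+1) ≠ 0 := by
            intro hc
            exact (hnd j).1 (by rw [hc, h]; ring)
          simp [h, hne]
        · have hyes : τ (j+1) = 0 := by
            rcases hτ (j+1) with h' | h' | h'
            · exact h'
            · exact absurd (by rw [h', h]; ring) (hnd j).1
            · exact absurd h' (h2 j h)
          simp [h, hyes]
      have tele : ∑ j : ZMod ℓ, (if τ (j+1) = 0 then (1:ℤ) else 0) =
          ∑ j : ZMod ℓ, (if τ j = 0 then (1:ℤ) else 0) :=
        Fintype.sum_equiv (Equiv.addRight 1) _ _ (fun j => rfl)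
      have hsum : ∑ j : ZMod ℓ, τ j =
          (∑ j : ZMod ℓ, (if τ (j+1) = 0 then (1:ℤ) else 0))
          - (∑ j : ZMod ℓ, (if τ j = 0 then (1:ℤ) else 0))
          + ∑ _j : ZMod ℓ, (1:ℤ) := by
        rw [← Finset.sum_sub_distrib, ← Finset.sum_add_distrib]
        apply Finset.sum_congr rfl
        intro j _
        have := key j
        linarith
      rw [hsum, tele]
      simp [ZMod.card]
end

section
/- Let N ≥ 1 and let τ : {0, 1, …, N−1} → ℤ be a function with τ(j) ∈ {0, 1, 2} for every j, which is non-decreasing in the sense that τ(j+1) ≠ τ(j) − 1 whenever j+1 ≤ N−1 and τ(j+2) ≠ τ(j) − 2 whenever j+2 ≤ N−1. Then: (i) if τ(j) = 2 and j+1 ≤ N−1 then τ(j+1) ∈ {0, 2}; (ii) if τ(j) = 0 and j ≥ 1 then τ(j−1) ∈ {0, 2}; (iii) if τ(j) = τ(j+1) = 0 for some j with j+1 ≤ N−1, then τ(i) = 0 for all i ≤ j+1; (iv) if τ(j) = τ(j+1) = 2 for some j with j+1 ≤ N−1, then τ(i) = 2 for all i with j ≤ i ≤ N−1. (Hence a non-decreasing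 string has the normal form 0^κ 1^{λ₁} 20 1^{λ₂} 20 ⋯ 20 1^{λ_r} 2^μ.) -/
/-- structure of finite non-decreasing strings over `{0,1,2}`:
(i) a `2` can only be followed by `0` or `2`; (ii) a `0` can only be preceded by
`0` or `2`; (iii) two consecutive `0`'s force `0`'s all the way to the left
boundary; (iv) two consecutive `2`'s force `2`'s all the way to the right
boundary. -/
theorem nondecreasing_string_normal_form
    (N : ℕ) (hN : 1 ≤ N)
    (τ : ℕ → ℤ)
    (hτ : ∀ j, j ≤ N - 1 → τ j = 0 ∨ τ j = 1 ∨ τ j = 2)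
    (hnd1 : ∀ j, j + 1 ≤ N - 1 → τ (j + 1) ≠ τ j - 1)
    (hnd2 : ∀ j, j + 2 ≤ N - 1 → τ (j + 2) ≠ τ j - 2) :
    (∀ j, j + 1 ≤ N - 1 → τ j = 2 → τ (j + 1) = 0 ∨ τ (j + 1) = 2) ∧
    (∀ j, 1 ≤ j → j ≤ N - 1 → τ j = 0 → τ (j - 1) = 0 ∨ τ (j - 1) = 2) ∧
    (∀ j, j + 1 ≤ N - 1 → τ j = 0 → τ (j + 1) = 0 → ∀ i, i ≤ j + 1 → τ i = 0) ∧
    (∀ j, j + 1 ≤ N - 1 → τ j = 2 → τ (j + 1) = 2 →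
      ∀ i, j ≤ i → i ≤ N - 1 → τ i = 2) := by
  refine ⟨?_, ?_, ?_, ?_⟩
  · intro j hj h2
    rcases hτ (j + 1) hj with h | h | h
    · left; exact h
    · exact absurd h (by have := hnd1 j hj; omega)
    · right; exact h
  · intro j h1 hj h0
    obtain ⟨m, rfl⟩ : ∃ m, j = m + 1 := ⟨j - 1, by omega⟩
    simp only [Nat.add_sub_cancel]
    rcases hτ m (by omega) with h | h | h
    · left; exact h
    · exact absurd h0 (by have := hnd1 m hj; omega)
    · right; exact h
  · intro j hj h0 h1 i hi
    have key : ∀ k, k ≤ j → τ (j - k) = 0 ∧ τ (j - k + 1) = 0 := by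
      intro k
      induction k with
      | zero => intro _; simpa using ⟨h0, h1⟩
      | succ k ih =>
        intro hk
        obtain ⟨hA, hB⟩ := ih (by omega)
        obtain ⟨m, hm⟩ : ∃ m, j - k = m + 1 := ⟨j - k - 1, by omega⟩
        have hjk1 : j - (k + 1) = m := by omega
        rw [hjk1]
        have hm1 : m + 1 ≤ N - 1 := by omega
        have hm2 : m + 2 ≤ N - 1 := by
          have : j - k + 1 ≤ j + 1 := by omega
          omega
        have e1 : τ (m + 1) = 0 := by rw [← hm]; exact hA
        have e2 : τ (m + 2) = 0 := by
          have : m + 2 = j - k + 1 := by omega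
          rw [this]; exact hB
        have hn1 := hnd1 m hm1
        have hn2 := hnd2 m hm2
        rcases hτ m (by omega) with h | h | h
        · exact ⟨h, e1⟩
        · omega
        · omega
    rcases Nat.lt_or_ge i (j + 1) with h | h
    · have hk := (key (j - i) (by omega)).1
      have he : j - (j - i) = i := by omega
      rwa [he] at hk
    · have : i = j + 1 := by omega
      rw [this]; exact h1
  · intro j hj h2 h2' i hij hi
    have key : ∀ k, j + 1 + k ≤ N - 1 → τ (j + k) = 2 ∧ τ (j + 1 + k) = 2 := by
      intro k
      induction k with
      | zero => intro _; simpa using ⟨h2, h2'⟩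
      | succ k ih =>
        intro hk
        obtain ⟨hA, hB⟩ := ih (by omega)
        have hn1 := hnd1 (j + k + 1) (by omega)
        have hn2 := hnd2 (j + k) (by omega)
        have eB : τ (j + k + 1) = 2 := by have : j + k + 1 = j + 1 + k := by omega
                                          rw [this]; exact hB
        refine ⟨by rw [show j + (k + 1) = j + k + 1 from by omega]; exact eB, ?_⟩
        rw [show j + 1 + (k + 1) = j + k + 2 from by omega]
        rw [eB] at hn1
        rcases hτ (j + k + 2) (by omega) with h | h | h
        · rw [hA] at hn2; omega
        · rw [show j + k + 1 + 1 = j + k + 2 from by omega] at hn1; omega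
        · exact h
    rcases Nat.lt_or_ge j i with h | h
    · have hk := key (i - j - 1) (by omega)
      have : j + 1 + (i - j - 1) = i := by omega
      rw [this] at hk
      exact hk.2
    · have : i = j := by omega
      rw [this]; exact h2
end
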